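/- arXiv:2507.15005 — 11 statements merged into one kernel-verified Lean document; each statement's English description precedes it below -/
import Mathlib

section
/- For every n ≥ 2 there exists a group homomorphism η₁ : T_n → Aut(F_n) such that for each 1 ≤ i ≤ n−1, η₁(s_i) is the automorphism of F_n sending x_i ↦ x_i x_{i+1} x_i^{-1}, x_{i+1} ↦ x_i x_{i+1}^{-1} x_i x_{i+1} x_i^{-1}, and x_k ↦ x_k for k ∉ {i, i+1}. -/
/-!
The prescribed endomorphism of `Fₙ` attached to `sᵢ` is an involution, e.g. applied twice to
`xᵢ` it gives `(xᵢxᵢ₊₁xᵢ⁻¹)(xᵢxᵢ₊₁⁻¹xᵢxᵢ₊₁xᵢ⁻¹)(xᵢxᵢ₊₁⁻¹xᵢ⁻¹) = xᵢ`; in particular it is an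
automorphism. Two such automorphisms moving disjoint pairs of generators commute, since each
fixes the generators the other one moves. Hence the relations of `Tₙ` hold, and the universal
property of the presentation gives `η₁`.
-/

/-- The defining relations of the twin group `Tₙ` on generators `s_0, …, s_{n-2}` (0-indexed):
`sᵢ² = 1` and `sᵢsⱼ = sⱼsᵢ` for `|i - j| ≥ 2`. -/
def twinRels (n : ℕ) : Set (FreeGroup (Fin (n - 1))) :=
  {r | (∃ i : Fin (n - 1), r = FreeGroup.of i * FreeGroup.of i) ∨
       (∃ i j : Fin (n - 1), (i.val + 2 ≤ j.val ∨ j.val + 2 ≤ i.val) ∧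
          r = FreeGroup.of i * FreeGroup.of j * (FreeGroup.of i)⁻¹ * (FreeGroup.of j)⁻¹)}

namespace FreeGroup

variable {α : Type*} [DecidableEq α]

def twinEndo (a b : α) : FreeGroup α →* FreeGroup α :=
  lift fun k =>
    if k = a then of a * of b * (of a)⁻¹
    else if k = b then of a * (of b)⁻¹ * of a * of b * (of a)⁻¹
    else of k

section

variable {a b : α}

@[simp]
lemma twinEndo_of_left : twinEndo a b (of a) = of a * of b * (of a)⁻¹ := by
  simp [twinEndo]

@[simp]
lemma twinEndo_of_right (hab : a ≠ b) :
    twinEndo a b (of b) = of a * (of b)⁻¹ * of a * of b * (of a)⁻¹ := by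
  simp [twinEndo, hab.symm]

lemma twinEndo_of_of_ne {k : α} (ha : k ≠ a) (hb : k ≠ b) : twinEndo a b (of k) = of k := by
  simp [twinEndo, ha, hb]

lemma twinEndo_comp_self (hab : a ≠ b) :
    (twinEndo a b).comp (twinEndo a b) = MonoidHom.id (FreeGroup α) := by
  refine ext_hom _ _ fun k => ?_
  by_cases ha : k = a
  · rw [ha]
    simp only [MonoidHom.comp_apply, MonoidHom.id_apply, twinEndo_of_left, _root_.map_mul,
      _root_.map_inv, twinEndo_of_right hab]
    group
  by_cases hb : k = b
  · rw [hb]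
    simp only [MonoidHom.comp_apply, MonoidHom.id_apply, twinEndo_of_right hab, _root_.map_mul,
      _root_.map_inv, twinEndo_of_left]
    group
  simp [twinEndo_of_of_ne ha hb]

def twinAut (a b : α) (hab : a ≠ b) : MulAut (FreeGroup α) :=
  (twinEndo a b).toMulEquiv (twinEndo a b) (twinEndo_comp_self hab) (twinEndo_comp_self hab)

@[simp]
lemma twinAut_apply (hab : a ≠ b) (x : FreeGroup α) : twinAut a b hab x = twinEndo a b x := rfl

lemma twinAut_mul_self (hab : a ≠ b) : twinAut a b hab * twinAut a b hab = 1 :=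
  MulEquiv.ext fun x => DFunLike.congr_fun (twinEndo_comp_self hab) x

end

lemma twinEndo_comm {a b c d : α} (hac : a ≠ c) (had : a ≠ d) (hbc : b ≠ c) (hbd : b ≠ d) :
    (twinEndo a b).comp (twinEndo c d) = (twinEndo c d).comp (twinEndo a b) := by
  refine ext_hom _ _ fun k => ?_
  simp only [MonoidHom.comp_apply, twinEndo, lift_apply_of]
  split_ifs <;> simp_all [eq_comm]

lemma commute_twinAut {a b c d : α} (hab : a ≠ b) (hcd : c ≠ d)
    (hac : a ≠ c) (had : a ≠ d) (hbc : b ≠ c) (hbd : b ≠ d) :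
    Commute (twinAut a b hab) (twinAut c d hcd) :=
  MulEquiv.ext fun x => DFunLike.congr_fun (twinEndo_comm hac had hbc hbd) x

end FreeGroup

lemma lift_eq_one_of_mem_twinRels {n : ℕ} {G : Type*} [Group G] {g : Fin (n - 1) → G}
    (hsq : ∀ i, g i * g i = 1)
    (hcomm : ∀ i j : Fin (n - 1), i.val + 2 ≤ j.val → Commute (g i) (g j)) :
    ∀ r ∈ twinRels n, FreeGroup.lift g r = 1 := by
  rintro r (⟨i, rfl⟩ | ⟨i, j, hij | hji, rfl⟩)
  · simpa using hsq i
  · simp [(hcomm i j hij).eq]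
  · simp [(hcomm j i hji).symm.eq]

/-- For every `n ≥ 2` there is a group homomorphism `η₁ : Tₙ → Aut(Fₙ)`
sending each generator `sᵢ` (0-indexed `i : Fin (n-1)`, corresponding to the 1-indexed
generator `s_{i+1}`) to the automorphism `x_i ↦ x_i x_{i+1} x_i⁻¹`,
`x_{i+1} ↦ x_i x_{i+1}⁻¹ x_i x_{i+1} x_i⁻¹`, `x_k ↦ x_k` otherwise
(0-indexed: the free generators moved are those with indices `i.val` and `i.val + 1`). -/
theorem statement1 (n : ℕ) :
    ∃ η : PresentedGroup (twinRels n) →* MulAut (FreeGroup (Fin n)),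
      ∀ i : Fin (n - 1),
        (η (PresentedGroup.of i) (FreeGroup.of ⟨i.val, by have := i.isLt; omega⟩) =
          FreeGroup.of ⟨i.val, by have := i.isLt; omega⟩ *
            FreeGroup.of ⟨i.val + 1, by have := i.isLt; omega⟩ *
            (FreeGroup.of ⟨i.val, by have := i.isLt; omega⟩)⁻¹) ∧
        (η (PresentedGroup.of i) (FreeGroup.of ⟨i.val + 1, by have := i.isLt; omega⟩) =
          FreeGroup.of ⟨i.val, by have := i.isLt; omega⟩ *
            (FreeGroup.of ⟨i.val + 1, by have := i.isLt; omega⟩)⁻¹ *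
            FreeGroup.of ⟨i.val, by have := i.isLt; omega⟩ *
            FreeGroup.of ⟨i.val + 1, by have := i.isLt; omega⟩ *
            (FreeGroup.of ⟨i.val, by have := i.isLt; omega⟩)⁻¹) ∧
        (∀ k : Fin n, k.val ≠ i.val → k.val ≠ i.val + 1 →
          η (PresentedGroup.of i) (FreeGroup.of k) = FreeGroup.of k) := by
  let lo (i : Fin (n - 1)) : Fin n := ⟨i.val, by have := i.isLt; omega⟩
  let hi (i : Fin (n - 1)) : Fin n := ⟨i.val + 1, by have := i.isLt; omega⟩
  have lo_ne_hi (i : Fin (n - 1)) : lo i ≠ hi i := by simp [lo, hi, Fin.ext_iff]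
  have hsq (i : Fin (n - 1)) := FreeGroup.twinAut_mul_self (lo_ne_hi i)
  have hcomm (i j : Fin (n - 1)) (hij : i.val + 2 ≤ j.val) :
      Commute (FreeGroup.twinAut _ _ (lo_ne_hi i)) (FreeGroup.twinAut _ _ (lo_ne_hi j)) := by
    apply FreeGroup.commute_twinAut <;> simp [lo, hi, Fin.ext_iff] <;> omega
  refine ⟨PresentedGroup.toGroup (lift_eq_one_of_mem_twinRels hsq hcomm), fun i => ?_⟩
  simp only [PresentedGroup.toGroup.of, FreeGroup.twinAut_apply]
  refine ⟨FreeGroup.twinEndo_of_left, FreeGroup.twinEndo_of_right (lo_ne_hi i),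
    fun k hlo hhi => FreeGroup.twinEndo_of_of_ne ?_ ?_⟩ <;> simpa [lo, hi, Fin.ext_iff]
end

section
/- For every n ≥ 2 there exists a group homomorphism η₁ : T_n → GL_n(ℤ[t^{±1}]) such that for each 1 ≤ i ≤ n−1, η₁(s_i) = S_i, where S_i is the n×n matrix that agrees with the identity matrix except in rows and columns i, i+1, where it has the 2×2 block [[1−t, t],[2−t, t−1]]. (Each S_i has determinant −1, hence is invertible over ℤ[t^{±1}].) -/
/-!
Each `Sᵢ` is a rank-one perturbation `1 + uᵢ wᵢᵀ` of the identity with `wᵢ ⬝ uᵢ = -2`, hence an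
involution, and for `|i - j| ≥ 2` the supports of `uᵢ, wᵢ` and `uⱼ, wⱼ` are disjoint, so
`wᵢ ⬝ uⱼ = wⱼ ⬝ uᵢ = 0` and `Sᵢ` commutes with `Sⱼ`. These are exactly the twin group relations.
-/

noncomputable section
open Matrix

/-- The `n × n` matrix over `ℤ[t^{±1}]` agreeing with the identity except in rows and
columns `i, i+1` (0-indexed), where it has the `2 × 2` block `[[1-t, t], [2-t, t-1]]`. -/
def Smat (n i : ℕ) : Matrix (Fin n) (Fin n) (LaurentPolynomial ℤ) :=
  Matrix.of fun j k =>
    if j.val = i ∧ k.val = i then 1 - LaurentPolynomial.T 1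
    else if j.val = i ∧ k.val = i + 1 then LaurentPolynomial.T 1
    else if j.val = i + 1 ∧ k.val = i then 2 - LaurentPolynomial.T 1
    else if j.val = i + 1 ∧ k.val = i + 1 then LaurentPolynomial.T 1 - 1
    else if j = k then 1 else 0

section RankOnePerturbation

variable {m R : Type*} [Fintype m] [DecidableEq m] [CommRing R]

theorem one_add_vecMulVec_mul_one_add_vecMulVec (u w u' w' : m → R) :
    (1 + vecMulVec u w) * (1 + vecMulVec u' w') =
      1 + vecMulVec u w + vecMulVec u' w' + (w ⬝ᵥ u') • vecMulVec u w' := by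
  rw [add_mul, mul_add, mul_add, vecMulVec_mul_vecMulVec, vecMulVec_smul]
  simp only [one_mul, mul_one]
  abel

theorem one_add_vecMulVec_mul_self {u w : m → R} (h : w ⬝ᵥ u = -2) :
    (1 + vecMulVec u w) * (1 + vecMulVec u w) = 1 := by
  rw [one_add_vecMulVec_mul_one_add_vecMulVec, h]
  module

theorem commute_one_add_vecMulVec {u w u' w' : m → R} (h : w ⬝ᵥ u' = 0) (h' : w' ⬝ᵥ u = 0) :
    Commute (1 + vecMulVec u w) (1 + vecMulVec u' w') := by
  rw [Commute, SemiconjBy, one_add_vecMulVec_mul_one_add_vecMulVec,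
    one_add_vecMulVec_mul_one_add_vecMulVec, h, h', zero_smul, zero_smul]
  abel

end RankOnePerturbation

theorem exists_twinGroup_hom {G : Type*} [Group G] {n : ℕ} (f : Fin (n - 1) → G)
    (hsq : ∀ i, f i * f i = 1)
    (hcomm : ∀ i j : Fin (n - 1), i.val + 2 ≤ j.val → Commute (f i) (f j)) :
    ∃ η : PresentedGroup (twinRels n) →* G, ∀ i, η (PresentedGroup.of i) = f i := by
  have hrels : ∀ r ∈ twinRels n, FreeGroup.lift f r = 1 := by
    rintro r (⟨i, rfl⟩ | ⟨i, j, hij, rfl⟩)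
    · simpa only [map_mul, FreeGroup.lift_apply_of] using hsq i
    · rw [← commutatorElement_def, map_commutatorElement, FreeGroup.lift_apply_of,
        FreeGroup.lift_apply_of, commutatorElement_eq_one_iff_commute]
      exact hij.elim (hcomm i j) fun hji => (hcomm j i hji).symm
  exact ⟨PresentedGroup.toGroup hrels, fun i => PresentedGroup.toGroup.of hrels⟩

namespace Smat

open LaurentPolynomial

def colVec (n i : ℕ) : Fin n → LaurentPolynomial ℤ := fun k =>
  if k.val = i then T 1 else if k.val = i + 1 then T 1 - 2 else 0

def rowVec (n i : ℕ) : Fin n → LaurentPolynomial ℤ := fun k =>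
  if k.val = i then -1 else if k.val = i + 1 then 1 else 0

theorem eq_one_add_vecMulVec (n i : ℕ) : Smat n i = 1 + vecMulVec (colVec n i) (rowVec n i) := by
  ext j k : 1
  simp only [Smat, of_apply, Matrix.add_apply, one_apply, vecMulVec_apply, colVec, rowVec]
  by_cases h1 : j.val = i <;> by_cases h2 : k.val = i <;>
    by_cases h3 : j.val = i + 1 <;> by_cases h4 : k.val = i + 1 <;>
    by_cases h5 : j = k <;>
    simp_all [Fin.ext_iff] <;> ring

theorem rowVec_dotProduct_colVec {n i : ℕ} (h : i + 1 < n) :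
    rowVec n i ⬝ᵥ colVec n i = -2 := by
  rw [dotProduct, Fintype.sum_eq_add ⟨i, by omega⟩ ⟨i + 1, h⟩ (by simp [Fin.ext_iff])]
  · simp only [rowVec, colVec, ↓reduceIte, Nat.add_eq_left, one_ne_zero]
    ring
  · rintro k ⟨hi, hi'⟩
    simp only [ne_eq, Fin.ext_iff] at hi hi'
    simp [rowVec, hi, hi']

theorem rowVec_dotProduct_colVec_of_far {n i j : ℕ} (hij : i + 2 ≤ j ∨ j + 2 ≤ i) :
    rowVec n i ⬝ᵥ colVec n j = 0 :=
  Finset.sum_eq_zero fun k _ => by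
    simp only [rowVec, colVec]
    split_ifs <;> first | omega | ring

theorem mul_self {n i : ℕ} (h : i + 1 < n) : Smat n i * Smat n i = 1 := by
  rw [eq_one_add_vecMulVec]
  exact one_add_vecMulVec_mul_self (rowVec_dotProduct_colVec h)

theorem commute_of_far (n : ℕ) {i j : ℕ} (hij : i + 2 ≤ j) : Commute (Smat n i) (Smat n j) := by
  rw [eq_one_add_vecMulVec, eq_one_add_vecMulVec]
  exact commute_one_add_vecMulVec (rowVec_dotProduct_colVec_of_far (.inl hij))
    (rowVec_dotProduct_colVec_of_far (.inr hij))

end Smat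

theorem statement2_general (n : ℕ) :
    ∃ η : PresentedGroup (twinRels n) →*
        Matrix.GeneralLinearGroup (Fin n) (LaurentPolynomial ℤ),
      ∀ i : Fin (n - 1),
        (η (PresentedGroup.of i) : Matrix (Fin n) (Fin n) (LaurentPolynomial ℤ)) =
          Smat n i.val := by
  have hsq (i : Fin (n - 1)) : Smat n i * Smat n i = 1 := Smat.mul_self (by omega)
  let S (i : Fin (n - 1)) : GL (Fin n) (LaurentPolynomial ℤ) := ⟨Smat n i, Smat n i, hsq i, hsq i⟩
  obtain ⟨η, hη⟩ := exists_twinGroup_hom S (fun i => Units.ext (hsq i))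
    (fun i j hij => Units.ext (Smat.commute_of_far n hij).eq)
  exact ⟨η, fun i => congrArg Units.val (hη i)⟩

/-- For every `n ≥ 2` there is a group homomorphism
`η₁ : Tₙ → GLₙ(ℤ[t^{±1}])` sending each generator `sᵢ` (0-indexed) to the matrix `Sᵢ`
agreeing with the identity except for the `2 × 2` block `[[1-t, t], [2-t, t-1]]`
in rows and columns `i, i+1`. -/
theorem statement2 (n : ℕ) (hn : 2 ≤ n) :
    ∃ η : PresentedGroup (twinRels n) →*
        Matrix.GeneralLinearGroup (Fin n) (LaurentPolynomial ℤ),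
      ∀ i : Fin (n - 1),
        (η (PresentedGroup.of i) : Matrix (Fin n) (Fin n) (LaurentPolynomial ℤ)) =
          Smat n i.val :=
  statement2_general n
end
end

section
/- For every n ≥ 2 and every 1 ≤ i ≤ n−1, the matrix S_i fixes the all-ones column vector: S_i · (1,1,…,1)ᵀ = (1,1,…,1)ᵀ. Consequently, for n ≥ 2 the ℤ[t^{±1}]-submodule of (ℤ[t^{±1}])ⁿ spanned by (1,1,…,1)ᵀ is a nonzero proper submodule invariant under S_i for every i, i.e. the representation η₁ : T_n → GL_n(ℤ[t^{±1}]) given by s_i ↦ S_i is reducible. -/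
/-! Every row of `Sᵢ` sums to `1`: the two special rows give `(1 - t) + t` and
`(2 - t) + (t - 1)`. Hence `Sᵢ` fixes the all-ones vector and so its span, which is a proper
submodule as soon as there are two coordinates. -/

noncomputable section
open Matrix

theorem Fin.sum_ite_val_eq_ite_val_eq_succ {M : Type*} [AddCommMonoid M] {n i : ℕ}
    (hi : i + 1 < n) (a b : M) :
    ∑ k : Fin n, (if k.val = i then a else if k.val = i + 1 then b else 0) = a + b := by
  rw [Finset.sum_eq_add_of_mem ⟨i, by omega⟩ ⟨i + 1, hi⟩ (Finset.mem_univ _) (Finset.mem_univ _)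
    (by simp [Fin.ext_iff])]
  · simp
  · intro k _ hk
    simp only [ne_eq, Fin.ext_iff] at hk
    simp [hk.1, hk.2]

theorem Smat_apply_of_val_eq {n i : ℕ} {j : Fin n} (hj : j.val = i) (k : Fin n) :
    Smat n i j k = if k.val = i then 1 - LaurentPolynomial.T 1
      else if k.val = i + 1 then LaurentPolynomial.T 1 else 0 := by
  simp only [Smat, of_apply, hj, true_and, Nat.ne_of_lt (Nat.lt_succ_self i), false_and, if_false]
  split_ifs <;> simp_all [Fin.ext_iff]

theorem Smat_apply_of_val_eq_succ {n i : ℕ} {j : Fin n} (hj : j.val = i + 1) (k : Fin n) :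
    Smat n i j k = if k.val = i then 2 - LaurentPolynomial.T 1
      else if k.val = i + 1 then LaurentPolynomial.T 1 - 1 else 0 := by
  simp only [Smat, of_apply, hj, true_and, (Nat.lt_succ_self i).ne', false_and, if_false]
  split_ifs <;> simp_all [Fin.ext_iff]

theorem Smat_apply_of_val_ne {n i : ℕ} {j : Fin n} (hi : j.val ≠ i) (hi' : j.val ≠ i + 1)
    (k : Fin n) : Smat n i j k = if j = k then 1 else 0 := by
  simp [Smat, hi, hi']

theorem Smat_mulVec_one {n i : ℕ} (hi : i + 1 < n) :
    Smat n i *ᵥ (fun _ => 1) = fun _ => 1 := by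
  funext j
  simp only [mulVec, dotProduct, mul_one]
  by_cases hj : j.val = i
  · simp only [Smat_apply_of_val_eq hj, Fin.sum_ite_val_eq_ite_val_eq_succ hi]
    ring
  by_cases hj' : j.val = i + 1
  · simp only [Smat_apply_of_val_eq_succ hj', Fin.sum_ite_val_eq_ite_val_eq_succ hi]
    ring
  · simp [Smat_apply_of_val_ne hj hj']

theorem Submodule.span_singleton_const_one_ne_top {R ι : Type*} [Semiring R] [Nontrivial R]
    {a b : ι} (hab : a ≠ b) : Submodule.span R {(fun _ => 1 : ι → R)} ≠ ⊤ := by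
  classical
  intro h
  have hsingle : Pi.single a (1 : R) ∈ Submodule.span R {fun _ => 1} := h ▸ Submodule.mem_top
  obtain ⟨c, hc⟩ := Submodule.mem_span_singleton.mp hsingle
  have ha := congrFun hc a
  have hb := congrFun hc b
  simp [hab.symm] at ha hb
  exact one_ne_zero (ha.symm.trans hb)

theorem Matrix.mulVec_mem_span_singleton_of_mulVec_eq {R ι : Type*} [CommSemiring R] [Fintype ι]
    {A : Matrix ι ι R} {v w : ι → R} (hv : A *ᵥ v = v) (hw : w ∈ Submodule.span R {v}) :
    A *ᵥ w ∈ Submodule.span R {v} := by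
  obtain ⟨c, rfl⟩ := Submodule.mem_span_singleton.mp hw
  rw [mulVec_smul, hv]
  exact Submodule.smul_mem _ c (Submodule.mem_span_singleton_self v)

/-- For every `n ≥ 2`, each matrix `Sᵢ` fixes the all-ones vector, and
consequently the `ℤ[t^{±1}]`-submodule of `(ℤ[t^{±1}])ⁿ` spanned by the all-ones vector
is a nonzero proper submodule invariant under every `Sᵢ`; i.e. the representation
`η₁ : Tₙ → GLₙ(ℤ[t^{±1}])`, `sᵢ ↦ Sᵢ`, is reducible. -/
theorem statement3 (n : ℕ) (hn : 2 ≤ n) :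
    (∀ i : Fin (n - 1),
      Smat n i.val *ᵥ (fun _ => 1) = (fun _ => (1 : LaurentPolynomial ℤ))) ∧
    Submodule.span (LaurentPolynomial ℤ)
        {(fun _ => 1 : Fin n → LaurentPolynomial ℤ)} ≠ ⊥ ∧
    Submodule.span (LaurentPolynomial ℤ)
        {(fun _ => 1 : Fin n → LaurentPolynomial ℤ)} ≠ ⊤ ∧
    (∀ i : Fin (n - 1), ∀ v ∈ Submodule.span (LaurentPolynomial ℤ)
        {(fun _ => 1 : Fin n → LaurentPolynomial ℤ)},
      Smat n i.val *ᵥ v ∈ Submodule.span (LaurentPolynomial ℤ)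
        {(fun _ => 1 : Fin n → LaurentPolynomial ℤ)}) := by
  have hfix (i : Fin (n - 1)) := Smat_mulVec_one (n := n) (i := i.val) (by omega)
  have hne : (⟨0, by omega⟩ : Fin n) ≠ ⟨1, by omega⟩ := by simp
  refine ⟨hfix, ?_, Submodule.span_singleton_const_one_ne_top hne,
    fun i _ hv => mulVec_mem_span_singleton_of_mulVec_eq (hfix i) hv⟩
  rw [Ne, Submodule.span_singleton_eq_bot]
  exact Function.ne_iff.mpr ⟨⟨0, by omega⟩, one_ne_zero⟩
end
end

section
/- For n = 2 and for n = 3, the group homomorphism η₁ : T_n → GL_n(ℤ[t^{±1}]) sending s_i to S_i is injective (i.e. the representation η₁ is faithful). -/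
/-!
`T₂` is generated by one involution and `T₃` by two, so every element of `Tₙ` (`n = 2, 3`)
is either a "rotation" `(s₁s₂)ᵏ` or a "reflection" `s₁(s₁s₂)ᵏ`, as in the infinite dihedral
group (with `s₂ = s₁` when `n = 2`). For `n = 2` it only remains to note `S₁ ≠ 1`. For `n = 3`,
specialise `t ↦ 2`: both `Sᵢ` then have determinant `-1`, so no reflection is in the kernel,
and `(S₁S₂)²` becomes `1 + E` with `E ≠ 0`, `E² = 0`, an element of infinite order, so no
nontrivial rotation is either.
-/

noncomputable section
open Matrix

instance Matrix.instIsAddTorsionFree {m n R : Type*} [AddMonoid R] [IsAddTorsionFree R] :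
    IsAddTorsionFree (Matrix m n R) :=
  inferInstanceAs (IsAddTorsionFree (m → n → R))

theorem not_isOfFinOrder_one_add_of_mul_self_eq_zero {R : Type*} [Ring R] [IsAddTorsionFree R]
    {E : R} (hE : E * E = 0) (hE0 : E ≠ 0) : ¬IsOfFinOrder (1 + E) := by
  have hpow (n : ℕ) : (1 + E) ^ n = 1 + n • E := by
    induction n with
    | zero => simp
    | succ n ih =>
      rw [pow_succ, ih, mul_add, mul_one, add_mul, smul_mul_assoc, hE, smul_zero, add_zero,
        one_mul, succ_nsmul, add_assoc]
  rintro hfin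
  obtain ⟨n, hn, h⟩ := isOfFinOrder_iff_pow_eq_one.1 hfin
  rw [hpow, add_eq_left, smul_eq_zero] at h
  exact h.elim (by omega) hE0

section Involutions

variable {G : Type*} [Group G] {a b : G}

theorem zpow_mul_eq_mul_zpow_neg_of_involutions (ha : a * a = 1) (hb : b * b = 1) (k : ℤ) :
    (a * b) ^ k * a = a * (a * b) ^ (-k) := by
  have ha' : a⁻¹ = a := inv_eq_of_mul_eq_one_right ha
  have hconj : a * (a * b) * a⁻¹ = (a * b)⁻¹ := by
    rw [_root_.mul_inv_rev, ha', inv_eq_of_mul_eq_one_right hb, ← mul_assoc, ha, one_mul]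
  have := conj_zpow (i := -k) (a := a) (b := a * b)
  rw [hconj, _root_.inv_zpow', neg_neg] at this
  rw [this, ha', mul_assoc, ha, mul_one]

theorem exists_zpow_of_mem_closure_pair_of_involutions (ha : a * a = 1) (hb : b * b = 1)
    {g : G} (hg : g ∈ Subgroup.closure {a, b}) :
    ∃ k : ℤ, g = (a * b) ^ k ∨ g = a * (a * b) ^ k := by
  have hswap := zpow_mul_eq_mul_zpow_neg_of_involutions ha hb
  induction hg using Subgroup.closure_induction with
  | mem x hx =>
    rcases hx with rfl | rfl
    · exact ⟨0, .inr (by rw [zpow_zero, mul_one])⟩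
    · exact ⟨1, .inr (by rw [zpow_one, ← mul_assoc, ha, one_mul])⟩
  | one => exact ⟨0, .inl (zpow_zero _).symm⟩
  | mul x y _ _ hx hy =>
    obtain ⟨k, rfl | rfl⟩ := hx <;> obtain ⟨l, rfl | rfl⟩ := hy
    · exact ⟨k + l, .inl (_root_.zpow_add _ _ _).symm⟩
    · exact ⟨-k + l, .inr (by rw [← mul_assoc, hswap, mul_assoc, ← _root_.zpow_add])⟩
    · exact ⟨k + l, .inr (by rw [mul_assoc, ← _root_.zpow_add])⟩
    · exact ⟨-k + l, .inl (by
        rw [mul_assoc, ← mul_assoc _ a, hswap, ← mul_assoc, ← mul_assoc, ha, one_mul,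
          ← _root_.zpow_add])⟩
  | inv x _ hx =>
    obtain ⟨k, rfl | rfl⟩ := hx
    · exact ⟨-k, .inl (_root_.zpow_neg _ _).symm⟩
    · refine ⟨k, .inr ?_⟩
      rw [_root_.mul_inv_rev, ← _root_.zpow_neg, inv_eq_of_mul_eq_one_right ha, hswap, neg_neg]

theorem injective_of_closure_pair_of_involutions {H : Type*} [Group H] (ha : a * a = 1)
    (hb : b * b = 1) (hgen : Subgroup.closure {a, b} = ⊤) (f : G →* H)
    (hrot : ∀ k : ℤ, f (a * b) ^ k = 1 → (a * b) ^ k = 1)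
    (hrefl : ∀ k : ℤ, f (a * (a * b) ^ k) ≠ 1) : Function.Injective f := by
  refine (injective_iff_map_eq_one f).2 fun g hg => ?_
  obtain ⟨k, rfl | rfl⟩ :=
    exists_zpow_of_mem_closure_pair_of_involutions ha hb (hgen ▸ Subgroup.mem_top g)
  · exact hrot k (by rwa [map_zpow] at hg)
  · exact absurd hg (hrefl k)

end Involutions

theorem PresentedGroup.closure_pair_of_eq_top {α : Type*} {rels : Set (FreeGroup α)} {i j : α}
    (h : ∀ x, x = i ∨ x = j) :
    Subgroup.closure {(of i : PresentedGroup rels), of j} = ⊤ :=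
  eq_top_mono (Subgroup.closure_mono (Set.range_subset_iff.2 fun x =>
    (h x).imp (congrArg of) (congrArg of))) (closure_range_of rels)

theorem twin_of_mul_of_self {n : ℕ} (i : Fin (n - 1)) :
    (PresentedGroup.of i : PresentedGroup (twinRels n)) * PresentedGroup.of i = 1 :=
  PresentedGroup.one_of_mem (Or.inl ⟨i, rfl⟩)

theorem Smat_two_zero_ne_one : Smat 2 0 ≠ 1 := fun h =>
  (LaurentPolynomial.isUnit_T 1).ne_zero (by simpa [Smat] using congrFun (congrFun h 0) 1)

theorem injective_of_val_eq_Smat_two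
    (η : PresentedGroup (twinRels 2) →* GL (Fin 2) (LaurentPolynomial ℤ))
    (hη : ∀ i : Fin (2 - 1),
      (η (PresentedGroup.of i) : Matrix (Fin 2) (Fin 2) _) = Smat 2 i.val) :
    Function.Injective η := by
  have ha := twin_of_mul_of_self (n := 2) 0
  refine injective_of_closure_pair_of_involutions ha ha
    (PresentedGroup.closure_pair_of_eq_top fun x => .inl (Fin.fin_one_eq_zero x)) η
    (fun k _ => by rw [ha, _root_.one_zpow]) fun k h => Smat_two_zero_ne_one ?_
  rw [ha, _root_.one_zpow, mul_one] at h
  exact (hη 0).symm.trans (by rw [h, Units.val_one])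

def evalTwo : LaurentPolynomial ℤ →+* ℚ :=
  LaurentPolynomial.eval₂ (Int.castRingHom ℚ) (Units.mk0 2 two_ne_zero)

theorem evalTwo_T_one : evalTwo (LaurentPolynomial.T 1) = 2 := by
  simp [evalTwo]

theorem Smat_three_zero_map_evalTwo :
    (Smat 3 0).map evalTwo = !![-1, 2, 0; 0, 1, 0; 0, 0, 1] := by
  ext i j
  fin_cases i <;> fin_cases j <;> norm_num [Smat, evalTwo_T_one, map_ofNat]

theorem Smat_three_one_map_evalTwo :
    (Smat 3 1).map evalTwo = !![1, 0, 0; 0, -1, 2; 0, 0, 1] := by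
  ext i j
  fin_cases i <;> fin_cases j <;> norm_num [Smat, evalTwo_T_one, map_ofNat]

theorem det_Smat_three_map_evalTwo (i : Fin 2) : ((Smat 3 i).map evalTwo).det = -1 := by
  fin_cases i
  · simp [Smat_three_zero_map_evalTwo, det_fin_three]
  · simp [Smat_three_one_map_evalTwo, det_fin_three]

theorem not_isOfFinOrder_Smat_three_map_evalTwo_mul :
    ¬IsOfFinOrder ((Smat 3 0).map evalTwo * (Smat 3 1).map evalTwo) := by
  set E : Matrix (Fin 3) (Fin 3) ℚ := !![0, 4, -4; 0, 0, 0; 0, 0, 0]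
  have hsq : ((Smat 3 0).map evalTwo * (Smat 3 1).map evalTwo) ^ 2 = 1 + E := by
    rw [Smat_three_zero_map_evalTwo, Smat_three_one_map_evalTwo, one_fin_three, sq]
    norm_num [E, of_add_of]
  have hE : E * E = 0 := by
    rw [mul_fin_three]
    simp [← Matrix.ext_iff, Fin.forall_fin_succ]
  have hE0 : E ≠ 0 := fun h => by simpa [E] using congrFun (congrFun h 0) 1
  exact fun h => not_isOfFinOrder_one_add_of_mul_self_eq_zero hE hE0 (hsq ▸ h.pow)

theorem injective_of_val_eq_Smat_three
    (η : PresentedGroup (twinRels 3) →* GL (Fin 3) (LaurentPolynomial ℤ))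
    (hη : ∀ i : Fin (3 - 1),
      (η (PresentedGroup.of i) : Matrix (Fin 3) (Fin 3) _) = Smat 3 i.val) :
    Function.Injective η := by
  set f := (GeneralLinearGroup.map evalTwo).comp η
  have hf (i : Fin 2) : (f (PresentedGroup.of i) : Matrix (Fin 3) (Fin 3) ℚ) =
      (Smat 3 i).map evalTwo := by
    simp [f, hη i]
  have hinf : ¬IsOfFinOrder (f (PresentedGroup.of 0 * PresentedGroup.of 1)) := by
    rw [← Units.isOfFinOrder_val, map_mul, Units.val_mul, hf, hf]
    exact not_isOfFinOrder_Smat_three_map_evalTwo_mul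
  have hdet (i : Fin 2) : GeneralLinearGroup.det (f (PresentedGroup.of i)) = -1 :=
    Units.ext (by rw [GeneralLinearGroup.val_det_apply, hf, det_Smat_three_map_evalTwo]; rfl)
  have hinj := injective_of_closure_pair_of_involutions (twin_of_mul_of_self 0)
    (twin_of_mul_of_self 1)
    (PresentedGroup.closure_pair_of_eq_top fun x => by fin_cases x <;> simp) f
    (fun k hk => ?_) fun k h => ?_
  · rw [MonoidHom.coe_comp] at hinj
    exact hinj.of_comp
  · by_contra hk0
    exact hinf (isOfFinOrder_iff_zpow_eq_one.2 ⟨k, fun h => hk0 (by rw [h, zpow_zero]), hk⟩)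
  · have := congrArg GeneralLinearGroup.det h
    simp [hdet] at this

/-- For `n = 2` and `n = 3`, the homomorphism `η₁ : Tₙ → GLₙ(ℤ[t^{±1}])`
sending each generator `sᵢ` to `Sᵢ` is injective (i.e. `η₁` is faithful). -/
theorem statement6 :
    (∀ η : PresentedGroup (twinRels 2) →*
        Matrix.GeneralLinearGroup (Fin 2) (LaurentPolynomial ℤ),
      (∀ i : Fin (2 - 1),
        (η (PresentedGroup.of i) : Matrix (Fin 2) (Fin 2) (LaurentPolynomial ℤ)) =
          Smat 2 i.val) →
      Function.Injective η) ∧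
    (∀ η : PresentedGroup (twinRels 3) →*
        Matrix.GeneralLinearGroup (Fin 3) (LaurentPolynomial ℤ),
      (∀ i : Fin (3 - 1),
        (η (PresentedGroup.of i) : Matrix (Fin 3) (Fin 3) (LaurentPolynomial ℤ)) =
          Smat 3 i.val) →
      Function.Injective η) :=
  ⟨injective_of_val_eq_Smat_two, injective_of_val_eq_Smat_three⟩
end
end

section
/- Let n ≥ 3 and let ĥ : VT_n → GL_n(ℤ[t^{±1}]) be a group homomorphism such that ĥ(s_i) = S_i for all 1 ≤ i ≤ n−1 and such that ĥ is 2-local, i.e. for each i, ĥ(ρ_i) agrees with the identity matrix except possibly in rows and columns i, i+1. Then there exists a unit b of ℤ[t^{±1}] such that for every 1 ≤ i ≤ n−1, ĥ(ρ_i) is the matrix agreeing with the identity except in rows and columns i, i+1, where it has the 2×2 block [[0, b],[b^{-1}, 0]]. -/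
noncomputable section
open Matrix

/-- The defining relations of the virtual twin group `VTₙ` on generators
`s_0, …, s_{n-2}` (the `Sum.inl` generators, 0-indexed) and `ρ_0, …, ρ_{n-2}`
(the `Sum.inr` generators, 0-indexed). -/
def vtRels (n : ℕ) : Set (FreeGroup (Fin (n - 1) ⊕ Fin (n - 1))) :=
  {r | (∃ i : Fin (n - 1),
          r = FreeGroup.of (Sum.inl i) * FreeGroup.of (Sum.inl i)) ∨
       (∃ i j : Fin (n - 1), (i.val + 2 ≤ j.val ∨ j.val + 2 ≤ i.val) ∧
          r = FreeGroup.of (Sum.inl i) * FreeGroup.of (Sum.inl j) *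
              (FreeGroup.of (Sum.inl i))⁻¹ * (FreeGroup.of (Sum.inl j))⁻¹) ∨
       (∃ i j : Fin (n - 1), j.val = i.val + 1 ∧
          r = FreeGroup.of (Sum.inr i) * FreeGroup.of (Sum.inr j) * FreeGroup.of (Sum.inr i) *
              (FreeGroup.of (Sum.inr j) * FreeGroup.of (Sum.inr i) * FreeGroup.of (Sum.inr j))⁻¹) ∨
       (∃ i j : Fin (n - 1), (i.val + 2 ≤ j.val ∨ j.val + 2 ≤ i.val) ∧
          r = FreeGroup.of (Sum.inr i) * FreeGroup.of (Sum.inr j) *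
              (FreeGroup.of (Sum.inr i))⁻¹ * (FreeGroup.of (Sum.inr j))⁻¹) ∨
       (∃ i : Fin (n - 1),
          r = FreeGroup.of (Sum.inr i) * FreeGroup.of (Sum.inr i)) ∨
       (∃ i j : Fin (n - 1), (i.val + 2 ≤ j.val ∨ j.val + 2 ≤ i.val) ∧
          r = FreeGroup.of (Sum.inl i) * FreeGroup.of (Sum.inr j) *
              (FreeGroup.of (Sum.inl i))⁻¹ * (FreeGroup.of (Sum.inr j))⁻¹) ∨
       (∃ i j : Fin (n - 1), j.val = i.val + 1 ∧
          r = FreeGroup.of (Sum.inr i) * FreeGroup.of (Sum.inr j) * FreeGroup.of (Sum.inl i) *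
              (FreeGroup.of (Sum.inl j) * FreeGroup.of (Sum.inr i) * FreeGroup.of (Sum.inr j))⁻¹)}

/-- The `n × n` matrix over `ℤ[t^{±1}]` agreeing with the identity except in rows and
columns `i, i+1` (0-indexed), where it has the `2 × 2` block `[[0, u], [u⁻¹, 0]]`,
for a unit `u` of `ℤ[t^{±1}]`. -/
def Rmat (n i : ℕ) (u : (LaurentPolynomial ℤ)ˣ) : Matrix (Fin n) (Fin n) (LaurentPolynomial ℤ) :=
  Matrix.of fun j k =>
    if j.val = i ∧ k.val = i then 0
    else if j.val = i ∧ k.val = i + 1 then (u : LaurentPolynomial ℤ)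
    else if j.val = i + 1 ∧ k.val = i then ((u⁻¹ : (LaurentPolynomial ℤ)ˣ) : LaurentPolynomial ℤ)
    else if j.val = i + 1 ∧ k.val = i + 1 then 0
    else if j = k then 1 else 0

/-!
Write `A`, `B` for the images of `ρᵢ`, `ρᵢ₊₁`. Both are 2-local involutions, and the relation
`ρᵢ ρᵢ₊₁ sᵢ = sᵢ₊₁ ρᵢ ρᵢ₊₁` says that `AB` intertwines `Sᵢ` and `Sᵢ₊₁`. Four entries of
`AB Sᵢ = Sᵢ₊₁ AB` in rows and columns `i, i+1, i+2`, together with `A² = B² = 1`, force both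
nontrivial blocks to be antidiagonal with the same entries `b, b⁻¹`; the computation only needs
that `t` and `2 - t` are nonzero in the domain `ℤ[t^{±1}]`. Induction on `i` then propagates
the unit `b` from `ρ₁` to all `ρᵢ`.
-/

open LaurentPolynomial

-- `[[a, b], [c, d]]` and `[[a', b'], [c', d']]` are the blocks of `A` at `x, y` and of `B`
-- at `y, z` in `Matrix.IsTwoLocal.twin_pair_antidiagonal`.
theorem twin_block_solution {R : Type*} [CommRing R] [IsDomain R]
    {t a b c d a' b' c' d' : R} (ht : t ≠ 0) (h2t : 2 - t ≠ 0)
    (hA : a * a + b * c = 1) (hA' : c * b + d * d = 1)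
    (hB : a' * a' + b' * c' = 1) (hB' : c' * b' + d' * d' = 1)
    (e₁ : b * a' * (2 - t) = a * t) (e₂ : d * a' * (2 - t) = 0)
    (e₃ : c' * (2 - t) = c * (2 - t)) (e₄ : t * (d * b') = t * d') :
    a = 0 ∧ d = 0 ∧ b * c = 1 ∧ a' = 0 ∧ d' = 0 ∧ b' = b ∧ c' = c := by
  have hc' : c' = c := mul_right_cancel₀ h2t e₃
  have hd' : d * b' = d' := mul_left_cancel₀ ht e₄
  have ha : a = 0 := by
    by_contra ha
    have ha' : a' ≠ 0 := by
      rintro rfl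
      exact mul_ne_zero ha ht (by linear_combination -e₁)
    have hd : d = 0 := by simpa [ha', h2t] using e₂
    have hd'0 : d' = 0 := by rw [← hd', hd, zero_mul]
    exact ha' (mul_self_eq_zero.mp (by linear_combination hB - hB' + d' * hd'0))
  have hbc : b * c = 1 := by linear_combination hA - a * ha
  have ha' : a' = 0 := by
    have h : b * (a' * (2 - t)) = 0 := by linear_combination e₁ + t * ha
    simpa [left_ne_zero_of_mul_eq_one hbc, h2t] using h
  have hd : d = 0 := mul_self_eq_zero.mp (by linear_combination hA' - hbc)
  have hb' : b' = b := mul_right_cancel₀ (right_ne_zero_of_mul_eq_one hbc)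
    (by linear_combination hB - a' * ha' - b' * hc' - hbc)
  exact ⟨ha, hd, hbc, ha', by rw [← hd', hd, zero_mul], hb', hc'⟩

namespace Matrix

variable {ι R : Type*} [Fintype ι] [DecidableEq ι]

def IsTwoLocal [Zero R] [One R] (A : Matrix ι ι R) (x y : ι) : Prop :=
  ∀ p q, (p ≠ x ∧ p ≠ y) ∨ (q ≠ x ∧ q ≠ y) → A p q = (1 : Matrix ι ι R) p q

namespace IsTwoLocal

variable [Semiring R] {A : Matrix ι ι R} {x y p q : ι}

theorem mul_apply_of_mem (hA : IsTwoLocal A x y) (hxy : x ≠ y) (hp : p = x ∨ p = y)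
    (M : Matrix ι ι R) (q : ι) : (A * M) p q = A p x * M x q + A p y * M y q := by
  rw [mul_apply]
  refine Fintype.sum_eq_add x y hxy fun l hl => ?_
  rw [hA p l (Or.inr hl), one_apply_ne, zero_mul]
  rintro rfl
  tauto

theorem mul_apply_of_ne (hA : IsTwoLocal A x y) (hpx : p ≠ x) (hpy : p ≠ y)
    (M : Matrix ι ι R) (q : ι) : (A * M) p q = M p q := by
  rw [mul_apply, Fintype.sum_eq_single p fun l hl => by
    rw [hA p l (Or.inl ⟨hpx, hpy⟩), one_apply_ne' hl, zero_mul]]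
  rw [hA p p (Or.inl ⟨hpx, hpy⟩), one_apply_eq, one_mul]

theorem mul_right_apply_of_mem (hA : IsTwoLocal A x y) (hxy : x ≠ y) (hq : q = x ∨ q = y)
    (M : Matrix ι ι R) (p : ι) : (M * A) p q = M p x * A x q + M p y * A y q := by
  rw [mul_apply]
  refine Fintype.sum_eq_add x y hxy fun l hl => ?_
  rw [hA l q (Or.inl hl), one_apply_ne, mul_zero]
  rintro rfl
  tauto

theorem mul_right_apply_of_ne (hA : IsTwoLocal A x y) (hqx : q ≠ x) (hqy : q ≠ y)
    (M : Matrix ι ι R) (p : ι) : (M * A) p q = M p q := by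
  rw [mul_apply, Fintype.sum_eq_single q fun l hl => by
    rw [hA l q (Or.inr ⟨hqx, hqy⟩), one_apply_ne hl, mul_zero]]
  rw [hA q q (Or.inr ⟨hqx, hqy⟩), one_apply_eq, mul_one]

theorem block_of_mul_self (hA : IsTwoLocal A x y) (hxy : x ≠ y) (hAA : A * A = 1) :
    A x x * A x x + A x y * A y x = 1 ∧ A y x * A x y + A y y * A y y = 1 := by
  have hx := congrFun (congrFun hAA x) x
  have hy := congrFun (congrFun hAA y) y
  rw [hA.mul_apply_of_mem hxy (Or.inl rfl), one_apply_eq] at hx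
  rw [hA.mul_apply_of_mem hxy (Or.inr rfl), one_apply_eq] at hy
  exact ⟨hx, hy⟩

end IsTwoLocal

structure IsTwinSBlock [Ring R] (S : Matrix ι ι R) (t : R) (x y : ι) : Prop where
  isTwoLocal : IsTwoLocal S x y
  apply_xx : S x x = 1 - t
  apply_xy : S x y = t
  apply_yx : S y x = 2 - t
  apply_yy : S y y = t - 1

theorem IsTwoLocal.twin_relations [CommRing R] {A B S S' : Matrix ι ι R} {x y z : ι} {t : R}
    (hxy : x ≠ y) (hxz : x ≠ z) (hyz : y ≠ z) (hA : IsTwoLocal A x y) (hB : IsTwoLocal B y z)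
    (hS : IsTwinSBlock S t x y) (hS' : IsTwinSBlock S' t y z) (h : A * B * S = S' * (A * B)) :
    A x y * B y y * (2 - t) = A x x * t ∧ A y y * B y y * (2 - t) = 0 ∧
      B z y * (2 - t) = A y x * (2 - t) ∧ t * (A y y * B y z) = t * B z z := by
  have hBx : ∀ q, B x q = (1 : Matrix ι ι R) x q := fun q => hB x q (Or.inl ⟨hxy, hxz⟩)
  have hBx' : ∀ p, B p x = (1 : Matrix ι ι R) p x := fun p => hB p x (Or.inr ⟨hxy, hxz⟩)
  have hPx := hA.mul_apply_of_mem hxy (Or.inl rfl) B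
  have hPy := hA.mul_apply_of_mem hxy (Or.inr rfl) B
  have hPz := hA.mul_apply_of_ne hxz.symm hyz.symm B
  have hS₁ := hS.isTwoLocal.mul_right_apply_of_mem hxy (Or.inl rfl) (A * B)
  have E₁ := congrFun (congrFun h x) x
  have E₂ := congrFun (congrFun h y) x
  have E₃ := congrFun (congrFun h z) x
  have E₄ := congrFun (congrFun h y) z
  rw [hS₁, hS'.isTwoLocal.mul_apply_of_ne hxy hxz] at E₁
  rw [hS₁, hS'.isTwoLocal.mul_apply_of_mem hyz (Or.inl rfl)] at E₂
  rw [hS₁, hS'.isTwoLocal.mul_apply_of_mem hyz (Or.inr rfl)] at E₃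
  rw [hS.isTwoLocal.mul_right_apply_of_ne hxz.symm hyz.symm,
    hS'.isTwoLocal.mul_apply_of_mem hyz (Or.inl rfl)] at E₄
  simp only [hPx, hPy, hPz, hBx, hBx', hS.apply_xx, hS.apply_yx, hS'.apply_xx, hS'.apply_xy,
    hS'.apply_yx, one_apply_eq, one_apply_ne hxy, one_apply_ne hxy.symm, one_apply_ne hxz,
    one_apply_ne hxz.symm] at E₁ E₂ E₃ E₄
  refine ⟨?_, ?_, ?_, ?_⟩
  · linear_combination E₁
  · linear_combination E₂
  · linear_combination E₃
  · linear_combination E₄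

theorem IsTwoLocal.twin_pair_antidiagonal [CommRing R] [IsDomain R] {A B S S' : Matrix ι ι R}
    {x y z : ι} {t : R} (ht : t ≠ 0) (h2t : 2 - t ≠ 0) (hxy : x ≠ y) (hxz : x ≠ z) (hyz : y ≠ z)
    (hA : IsTwoLocal A x y) (hB : IsTwoLocal B y z) (hAA : A * A = 1) (hBB : B * B = 1)
    (hS : IsTwinSBlock S t x y) (hS' : IsTwinSBlock S' t y z) (h : A * B * S = S' * (A * B)) :
    A x x = 0 ∧ A y y = 0 ∧ A x y * A y x = 1 ∧ B y y = 0 ∧ B z z = 0 ∧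
      B y z = A x y ∧ B z y = A y x := by
  obtain ⟨hA₁, hA₂⟩ := hA.block_of_mul_self hxy hAA
  obtain ⟨hB₁, hB₂⟩ := hB.block_of_mul_self hyz hBB
  obtain ⟨e₁, e₂, e₃, e₄⟩ := hA.twin_relations hxy hxz hyz hB hS hS' h
  exact twin_block_solution ht h2t hA₁ hA₂ hB₁ hB₂ e₁ e₂ e₃ e₄

end Matrix

open Matrix

theorem Smat_isTwinSBlock {n i : ℕ} (hi : i + 1 < n) :
    IsTwinSBlock (Smat n i) (T 1) ⟨i, by omega⟩ ⟨i + 1, hi⟩ where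
  isTwoLocal p q hpq := by
    simp only [ne_eq, Fin.ext_iff] at hpq
    simp only [Smat, of_apply, one_apply, Fin.ext_iff]
    split_ifs <;> first | rfl | omega
  apply_xx := by simp [Smat]
  apply_xy := by simp [Smat]
  apply_yx := by simp [Smat]
  apply_yy := by simp [Smat]

theorem Rmat_injective {n i : ℕ} (hi : i + 1 < n) : Function.Injective (Rmat n i) := by
  intro u v h
  exact Units.ext <| by simpa [Rmat] using congrFun (congrFun h ⟨i, by omega⟩) ⟨i + 1, hi⟩

theorem eq_Rmat_of_isTwoLocal {n i : ℕ} (hi : i + 1 < n) {A : Matrix (Fin n) (Fin n) ℤ[T;T⁻¹]}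
    {u : ℤ[T;T⁻¹]ˣ} (hA : IsTwoLocal A ⟨i, by omega⟩ ⟨i + 1, hi⟩)
    (h₀₀ : A ⟨i, by omega⟩ ⟨i, by omega⟩ = 0) (h₀₁ : A ⟨i, by omega⟩ ⟨i + 1, hi⟩ = u)
    (h₁₀ : A ⟨i + 1, hi⟩ ⟨i, by omega⟩ = ↑u⁻¹) (h₁₁ : A ⟨i + 1, hi⟩ ⟨i + 1, hi⟩ = 0) :
    A = Rmat n i u := by
  ext ⟨p, hp⟩ ⟨q, hq⟩ : 2
  by_cases hpq : (p = i ∨ p = i + 1) ∧ (q = i ∨ q = i + 1)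
  · obtain ⟨rfl | rfl, rfl | rfl⟩ := hpq <;> simp [Rmat, *]
  · rw [hA _ _ (by simp only [ne_eq, Fin.ext_iff]; omega)]
    simp only [Rmat, of_apply, one_apply, Fin.ext_iff]
    split_ifs <;> first | rfl | omega

theorem LaurentPolynomial.two_sub_T_one_ne_zero : (2 - T 1 : ℤ[T;T⁻¹]) ≠ 0 := fun h => by
  simpa [map_ofNat] using congrArg (eval₂ (RingHom.id ℤ) 1) h

theorem vtRels_rho_mul_self {n : ℕ} (i : Fin (n - 1)) :
    (PresentedGroup.of (Sum.inr i) * PresentedGroup.of (Sum.inr i) : PresentedGroup (vtRels n)) =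
      1 :=
  (map_mul (PresentedGroup.mk _) _ _).symm.trans <|
    PresentedGroup.one_of_mem <| Or.inr <| Or.inr <| Or.inr <| Or.inr <| Or.inl ⟨i, rfl⟩

theorem vtRels_rho_mul_rho_mul_s {n : ℕ} {i j : Fin (n - 1)} (hj : j.val = i.val + 1) :
    (PresentedGroup.of (Sum.inr i) * PresentedGroup.of (Sum.inr j) * PresentedGroup.of (Sum.inl i) :
        PresentedGroup (vtRels n)) =
      PresentedGroup.of (Sum.inl j) * PresentedGroup.of (Sum.inr i) *
        PresentedGroup.of (Sum.inr j) := by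
  have h := PresentedGroup.mk_eq_mk_of_mul_inv_mem (rels := vtRels n) <|
    Or.inr <| Or.inr <| Or.inr <| Or.inr <| Or.inr <| Or.inr ⟨i, j, hj, rfl⟩
  simp only [map_mul] at h
  exact h

theorem exists_unit_rho_eq_Rmat_of_consecutive {n : ℕ}
    (φ : PresentedGroup (vtRels n) →* Matrix (Fin n) (Fin n) ℤ[T;T⁻¹])
    (hs : ∀ i, φ (PresentedGroup.of (Sum.inl i)) = Smat n i)
    (hloc : ∀ i : Fin (n - 1), IsTwoLocal (φ (PresentedGroup.of (Sum.inr i)))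
      ⟨i, Nat.lt_of_lt_pred i.isLt⟩ ⟨i + 1, Nat.add_lt_of_lt_sub i.isLt⟩)
    (k : ℕ) (hk : k + 2 < n) :
    ∃ u, φ (PresentedGroup.of (Sum.inr ⟨k, by omega⟩)) = Rmat n k u ∧
      φ (PresentedGroup.of (Sum.inr ⟨k + 1, by omega⟩)) = Rmat n (k + 1) u := by
  have hsq (i : Fin (n - 1)) : φ (.of (.inr i)) * φ (.of (.inr i)) = 1 := by
    rw [← map_mul, vtRels_rho_mul_self, map_one]
  have hmix := congrArg φ <|
    vtRels_rho_mul_rho_mul_s (i := ⟨k, by omega⟩) (j := ⟨k + 1, by omega⟩) rfl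
  simp only [map_mul, hs, mul_assoc (Smat _ _)] at hmix
  obtain ⟨h₀₀, h₁₁, hu, h₁₁', h₂₂, h₁₂, h₂₁⟩ :=
    (hloc ⟨k, by omega⟩).twin_pair_antidiagonal (isUnit_T 1).ne_zero two_sub_T_one_ne_zero
      (by simp [Fin.ext_iff]) (by simp [Fin.ext_iff, add_assoc]) (by simp [Fin.ext_iff])
      (hloc ⟨k + 1, by omega⟩) (hsq _) (hsq _) (Smat_isTwinSBlock _) (Smat_isTwinSBlock _) hmix
  exact ⟨Units.mkOfMulEqOne _ _ hu, eq_Rmat_of_isTwoLocal _ (hloc _) h₀₀ rfl rfl h₁₁,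
    eq_Rmat_of_isTwoLocal _ (hloc _) h₁₁' h₁₂ h₂₁ h₂₂⟩

/-- Let `n ≥ 3` and let `ĥ : VTₙ → GLₙ(ℤ[t^{±1}])` be a group homomorphism
with `ĥ(sᵢ) = Sᵢ` for all `i`, which is 2-local, i.e. each `ĥ(ρᵢ)` agrees with the
identity matrix except possibly in rows and columns `i, i+1`. Then there is a unit `b`
of `ℤ[t^{±1}]` such that every `ĥ(ρᵢ)` agrees with the identity except for the block
`[[0, b], [b⁻¹, 0]]` in rows and columns `i, i+1`. -/
theorem statement9 (n : ℕ) (hn : 3 ≤ n)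
    (h : PresentedGroup (vtRels n) →*
      Matrix.GeneralLinearGroup (Fin n) (LaurentPolynomial ℤ))
    (hs : ∀ i : Fin (n - 1),
      (h (PresentedGroup.of (Sum.inl i)) :
        Matrix (Fin n) (Fin n) (LaurentPolynomial ℤ)) = Smat n i.val)
    (hloc : ∀ i : Fin (n - 1), ∀ j k : Fin n,
      ((j.val ≠ i.val ∧ j.val ≠ i.val + 1) ∨ (k.val ≠ i.val ∧ k.val ≠ i.val + 1)) →
      (h (PresentedGroup.of (Sum.inr i)) :
          Matrix (Fin n) (Fin n) (LaurentPolynomial ℤ)) j k =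
        (1 : Matrix (Fin n) (Fin n) (LaurentPolynomial ℤ)) j k) :
    ∃ b : (LaurentPolynomial ℤ)ˣ, ∀ i : Fin (n - 1),
      (h (PresentedGroup.of (Sum.inr i)) :
        Matrix (Fin n) (Fin n) (LaurentPolynomial ℤ)) = Rmat n i.val b := by
  set φ := (Units.coeHom _).comp h
  have hφloc (i : Fin (n - 1)) : IsTwoLocal (φ (PresentedGroup.of (Sum.inr i)))
      ⟨i, Nat.lt_of_lt_pred i.isLt⟩ ⟨i + 1, Nat.add_lt_of_lt_sub i.isLt⟩ :=
    fun p q hpq => hloc i p q (by simpa [Fin.ext_iff] using hpq)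
  obtain ⟨u, hu₀, -⟩ := exists_unit_rho_eq_Rmat_of_consecutive φ hs hφloc 0 (by omega)
  refine ⟨u, fun ⟨k, hk⟩ => ?_⟩
  induction k with
  | zero => exact hu₀
  | succ k ih =>
    obtain ⟨v, hv, hv'⟩ := exists_unit_rho_eq_Rmat_of_consecutive φ hs hφloc k (by omega)
    obtain rfl := Rmat_injective (by omega) (hv.symm.trans (ih (by omega)))
    exact hv'
end
end

section
/- Let n ≥ 3 and let b be any unit of ℤ[t^{±1}]. Then there exists a group homomorphism ĥ : VT_n → GL_n(ℤ[t^{±1}]) such that for every 1 ≤ i ≤ n−1, ĥ(s_i) = S_i and ĥ(ρ_i) is the n×n matrix agreeing with the identity except in rows and columns i, i+1, where it has the 2×2 block [[0, b],[b^{-1}, 0]]. -/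
/-!
Each generator is sent to a matrix that is the identity outside a diagonal `2 × 2` block, i.e.
to the image of a `2 × 2` matrix under the multiplicative map `A ↦ 1 + Pᵀ (A - 1) P` attached
to a window embedding `Fin 2 ↪ Fin n`. The relations `sᵢ² = ρᵢ² = 1` are then `2 × 2` matrix
identities; generators whose windows are disjoint commute, since the corrections `Pᵀ (A - 1) P`
multiply to zero; and generators with adjacent indices live in a common `3 × 3` window, where the
braid and mixed relations are explicit `3 × 3` matrix identities.
-/

noncomputable section
open Matrix

namespace Matrix

variable {l m m' n R : Type*} [Fintype m] [DecidableEq n] [Ring R]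

-- `Pᵀ X P` for the `0/1` matrix `P` of `e`; multiplicativity is then `P Pᵀ = 1`.
def extendByZero (e : m ↪ n) (X : Matrix m m R) : Matrix n n R :=
  (1 : Matrix n n R).submatrix id e * X * (1 : Matrix n n R).submatrix e id

theorem extendByZero_add (e : m ↪ n) (X Y : Matrix m m R) :
    extendByZero e (X + Y) = extendByZero e X + extendByZero e Y := by
  simp only [extendByZero, Matrix.mul_add, Matrix.add_mul]

theorem extendByZero_mul [DecidableEq m] [Fintype n] (e : m ↪ n) (X Y : Matrix m m R) :
    extendByZero e (X * Y) = extendByZero e X * extendByZero e Y := by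
  have hP : (1 : Matrix n n R).submatrix e id * (1 : Matrix n n R).submatrix id e = 1 :=
    (one_submatrix_mul e (Equiv.refl n) _).trans (submatrix_one_embedding e)
  calc extendByZero e (X * Y)
      = (1 : Matrix n n R).submatrix id e * X *
          ((1 : Matrix n n R).submatrix e id * (1 : Matrix n n R).submatrix id e) * Y *
          (1 : Matrix n n R).submatrix e id := by
        rw [hP, Matrix.mul_one, extendByZero, Matrix.mul_assoc _ X Y]
    _ = extendByZero e X * extendByZero e Y := by simp only [extendByZero, Matrix.mul_assoc]

theorem extendByZero_mul_extendByZero_of_disjoint [Fintype m'] [Fintype n] {e : m ↪ n}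
    {f : m' ↪ n} (h : Disjoint (Set.range e) (Set.range f)) (X : Matrix m m R)
    (Y : Matrix m' m' R) : extendByZero e X * extendByZero f Y = 0 := by
  have hP : (1 : Matrix n n R).submatrix e id * (1 : Matrix n n R).submatrix id f = 0 := by
    refine (one_submatrix_mul e (Equiv.refl n) _).trans ?_
    ext a b
    exact one_apply_ne (h.ne_of_mem (Set.mem_range_self a) (Set.mem_range_self b))
  simp only [extendByZero, Matrix.mul_assoc]
  rw [← Matrix.mul_assoc _ _ (Y * _), hP, Matrix.zero_mul, Matrix.mul_zero, Matrix.mul_zero]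

theorem extendByZero_trans [Fintype l] [DecidableEq m] (f : l ↪ m) (e : m ↪ n)
    (X : Matrix l l R) : extendByZero (f.trans e) X = extendByZero e (extendByZero f X) := by
  have hleft : (1 : Matrix n n R).submatrix id e * (1 : Matrix m m R).submatrix id f =
      (1 : Matrix n n R).submatrix id (f.trans e) :=
    mul_submatrix_one (Equiv.refl m) f _
  have hright : (1 : Matrix m m R).submatrix f id * (1 : Matrix n n R).submatrix e id =
      (1 : Matrix n n R).submatrix (f.trans e) id :=
    one_submatrix_mul f (Equiv.refl m) _
  simp only [extendByZero, ← hleft, ← hright, Matrix.mul_assoc]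

theorem extendByZero_apply_apply [DecidableEq m] (e : m ↪ n) (X : Matrix m m R) (a b : m) :
    extendByZero e X (e a) (e b) = X a b := by
  simp [extendByZero, mul_apply, one_apply]

theorem extendByZero_apply_of_notMem_range_left (e : m ↪ n) (X : Matrix m m R) {j : n}
    (hj : j ∉ Set.range e) (k : n) : extendByZero e X j k = 0 := by
  simp_all [extendByZero, mul_apply, one_apply, eq_comm (a := j)]

theorem extendByZero_apply_of_notMem_range_right (e : m ↪ n) (X : Matrix m m R) (j : n) {k : n}
    (hk : k ∉ Set.range e) : extendByZero e X j k = 0 := by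
  simp_all [extendByZero, mul_apply, one_apply]

variable [DecidableEq m] [Fintype n]

def extendByOne (e : m ↪ n) : Matrix m m R →* Matrix n n R where
  toFun A := 1 + extendByZero e (A - 1)
  map_one' := by simp [extendByZero]
  map_mul' A B := by
    have h : A * B - 1 = (A - 1) + (B - 1) + (A - 1) * (B - 1) := by noncomm_ring
    simp only [h, extendByZero_add, extendByZero_mul]
    noncomm_ring

theorem extendByOne_apply (e : m ↪ n) (A : Matrix m m R) :
    extendByOne e A = 1 + extendByZero e (A - 1) := rfl

theorem extendByOne_apply_apply (e : m ↪ n) (A : Matrix m m R) (a b : m) :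
    extendByOne e A (e a) (e b) = A a b := by
  simp [extendByOne_apply, extendByZero_apply_apply, one_apply]

theorem extendByOne_apply_of_notMem_range_left (e : m ↪ n) (A : Matrix m m R) {j : n}
    (hj : j ∉ Set.range e) (k : n) : extendByOne e A j k = (1 : Matrix n n R) j k := by
  simp [extendByOne_apply, extendByZero_apply_of_notMem_range_left e _ hj]

theorem extendByOne_apply_of_notMem_range_right (e : m ↪ n) (A : Matrix m m R) (j : n) {k : n}
    (hk : k ∉ Set.range e) : extendByOne e A j k = (1 : Matrix n n R) j k := by
  simp [extendByOne_apply, extendByZero_apply_of_notMem_range_right e _ _ hk]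

theorem extendByOne_trans [Fintype l] [DecidableEq l] (f : l ↪ m) (e : m ↪ n)
    (A : Matrix l l R) : extendByOne (f.trans e) A = extendByOne e (extendByOne f A) := by
  simp [extendByOne_apply, extendByZero_trans]

theorem commute_extendByOne_of_disjoint [Fintype m'] [DecidableEq m'] {e : m ↪ n} {f : m' ↪ n}
    (h : Disjoint (Set.range e) (Set.range f)) (A : Matrix m m R) (B : Matrix m' m' R) :
    Commute (extendByOne e A) (extendByOne f B) := by
  have hAB := extendByZero_mul_extendByZero_of_disjoint h (A - 1) (B - 1)
  have hBA := extendByZero_mul_extendByZero_of_disjoint h.symm (B - 1) (A - 1)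
  simp only [Commute, SemiconjBy, extendByOne_apply, mul_add, add_mul, mul_one, one_mul, hAB,
    hBA]
  abel

theorem extendByOne_castSuccEmb (A : Matrix (Fin 2) (Fin 2) R) :
    extendByOne Fin.castSuccEmb A = !![A 0 0, A 0 1, 0; A 1 0, A 1 1, 0; 0, 0, 1] := by
  ext p q
  fin_cases p <;> fin_cases q <;>
    simp [extendByOne_apply, extendByZero, mul_apply, Fin.sum_univ_two, one_apply]

theorem extendByOne_succEmb (A : Matrix (Fin 2) (Fin 2) R) :
    extendByOne (Fin.succEmb 2) A = !![1, 0, 0; 0, A 0 0, A 0 1; 0, A 1 0, A 1 1] := by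
  ext p q
  fin_cases p <;> fin_cases q <;>
    simp [extendByOne_apply, extendByZero, mul_apply, Fin.sum_univ_two, one_apply]

end Matrix

namespace Fin

def window {n : ℕ} (i w : ℕ) (h : i + w ≤ n) : Fin w ↪ Fin n :=
  (natAddEmb i).trans (castLEEmb h)

@[simp]
theorem val_window {n : ℕ} (i w : ℕ) (h : i + w ≤ n) (a : Fin w) :
    (window i w h a : ℕ) = i + a := rfl

theorem mem_range_window {n i w : ℕ} (h : i + w ≤ n) {x : Fin n} :
    x ∈ Set.range (window i w h) ↔ i ≤ x ∧ x < i + w := by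
  constructor
  · rintro ⟨a, rfl⟩
    simp only [val_window]
    omega
  · intro hx
    exact ⟨⟨x - i, by omega⟩, Fin.ext (by simp only [val_window]; omega)⟩

theorem disjoint_range_window {n i j w v : ℕ} (hi : i + w ≤ n) (hj : j + v ≤ n)
    (h : i + w ≤ j ∨ j + v ≤ i) :
    Disjoint (Set.range (window i w hi)) (Set.range (window j v hj)) := by
  rw [Set.disjoint_left]
  intro x
  simp only [mem_range_window]
  omega

theorem castSuccEmb_trans_window {n i : ℕ} (h : i + 3 ≤ n) (h' : i + 2 ≤ n) :
    castSuccEmb.trans (window i 3 h) = window i 2 h' := by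
  ext a
  simp

theorem succEmb_trans_window {n i j : ℕ} (h : i + 3 ≤ n) (h' : j + 2 ≤ n) (hj : j = i + 1) :
    (succEmb 2).trans (window i 3 h) = window j 2 h' := by
  ext a
  simp only [Function.Embedding.trans_apply, coe_succEmb, val_window, val_succ]
  omega

end Fin

theorem Matrix.extendByOne_window_two_apply {R : Type*} [Ring R] {n i : ℕ} (h : i + 2 ≤ n)
    (A : Matrix (Fin 2) (Fin 2) R) (j k : Fin n) :
    extendByOne (Fin.window i 2 h) A j k =
      if j.val = i ∧ k.val = i then A 0 0
      else if j.val = i ∧ k.val = i + 1 then A 0 1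
      else if j.val = i + 1 ∧ k.val = i then A 1 0
      else if j.val = i + 1 ∧ k.val = i + 1 then A 1 1
      else if j = k then 1 else 0 := by
  by_cases hj : j ∈ Set.range (Fin.window i 2 h)
  · by_cases hk : k ∈ Set.range (Fin.window i 2 h)
    · obtain ⟨a, rfl⟩ := hj
      obtain ⟨b, rfl⟩ := hk
      rw [extendByOne_apply_apply]
      fin_cases a <;> fin_cases b <;> simp
    · rw [extendByOne_apply_of_notMem_range_right _ _ _ hk, one_apply]
      rw [Fin.mem_range_window] at hj hk
      have : j ≠ k := by rintro rfl; exact hk hj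
      simp only [this, if_false]
      split_ifs <;> first | rfl | omega
  · rw [extendByOne_apply_of_notMem_range_left _ _ hj, one_apply]
    rw [Fin.mem_range_window] at hj
    split_ifs <;> first | rfl | omega

theorem exists_hom_presentedGroup_vtRels {G : Type*} [Group G] {n : ℕ} (s ρ : Fin (n - 1) → G)
    (hs : ∀ i, s i * s i = 1)
    (hss : ∀ i j : Fin (n - 1), (i.val + 2 ≤ j.val ∨ j.val + 2 ≤ i.val) → Commute (s i) (s j))
    (hρρρ : ∀ i j : Fin (n - 1), j.val = i.val + 1 → ρ i * ρ j * ρ i = ρ j * ρ i * ρ j)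
    (hρρ : ∀ i j : Fin (n - 1), (i.val + 2 ≤ j.val ∨ j.val + 2 ≤ i.val) → Commute (ρ i) (ρ j))
    (hρ : ∀ i, ρ i * ρ i = 1)
    (hsρ : ∀ i j : Fin (n - 1), (i.val + 2 ≤ j.val ∨ j.val + 2 ≤ i.val) → Commute (s i) (ρ j))
    (hρρs : ∀ i j : Fin (n - 1), j.val = i.val + 1 → ρ i * ρ j * s i = s j * ρ i * ρ j) :
    ∃ h : PresentedGroup (vtRels n) →* G,
      ∀ i, h (PresentedGroup.of (Sum.inl i)) = s i ∧ h (PresentedGroup.of (Sum.inr i)) = ρ i := by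
  have hrels : ∀ r ∈ vtRels n, FreeGroup.lift (Sum.elim s ρ) r = 1 := by
    rintro r (⟨i, rfl⟩ | ⟨i, j, hij, rfl⟩ | ⟨i, j, hij, rfl⟩ | ⟨i, j, hij, rfl⟩ | ⟨i, rfl⟩ |
      ⟨i, j, hij, rfl⟩ | ⟨i, j, hij, rfl⟩) <;>
      simp only [← commutatorElement_def, map_commutatorElement, map_mul, map_inv,
        FreeGroup.lift_apply_of, Sum.elim_inl, Sum.elim_inr, commutatorElement_eq_one_iff_commute,
        mul_inv_eq_one]
    exacts [hs i, hss i j hij, hρρρ i j hij, hρρ i j hij, hρ i, hsρ i j hij, hρρs i j hij]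
  exact ⟨PresentedGroup.toGroup hrels,
    fun _ => ⟨PresentedGroup.toGroup.of hrels, PresentedGroup.toGroup.of hrels⟩⟩

open LaurentPolynomial

def twinBlock : Matrix (Fin 2) (Fin 2) (LaurentPolynomial ℤ) :=
  !![1 - T 1, T 1; 2 - T 1, T 1 - 1]

def virtualBlock (u : (LaurentPolynomial ℤ)ˣ) : Matrix (Fin 2) (Fin 2) (LaurentPolynomial ℤ) :=
  !![0, (u : LaurentPolynomial ℤ); ((u⁻¹ : (LaurentPolynomial ℤ)ˣ) : LaurentPolynomial ℤ), 0]

theorem twinBlock_mul_self : twinBlock * twinBlock = 1 := by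
  rw [twinBlock, mul_fin_two, one_fin_two]
  ring_nf

theorem virtualBlock_mul_self (u : (LaurentPolynomial ℤ)ˣ) :
    virtualBlock u * virtualBlock u = 1 := by
  simp [virtualBlock, one_fin_two]

theorem virtualBlock_braid (u : (LaurentPolynomial ℤ)ˣ) :
    extendByOne Fin.castSuccEmb (virtualBlock u) * extendByOne (Fin.succEmb 2) (virtualBlock u) *
        extendByOne Fin.castSuccEmb (virtualBlock u) =
      extendByOne (Fin.succEmb 2) (virtualBlock u) * extendByOne Fin.castSuccEmb (virtualBlock u) *
        extendByOne (Fin.succEmb 2) (virtualBlock u) := by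
  simp [extendByOne_castSuccEmb, extendByOne_succEmb, virtualBlock]

theorem virtualBlock_twinBlock_mixed_braid (u : (LaurentPolynomial ℤ)ˣ) :
    extendByOne Fin.castSuccEmb (virtualBlock u) * extendByOne (Fin.succEmb 2) (virtualBlock u) *
        extendByOne Fin.castSuccEmb twinBlock =
      extendByOne (Fin.succEmb 2) twinBlock * extendByOne Fin.castSuccEmb (virtualBlock u) *
        extendByOne (Fin.succEmb 2) (virtualBlock u) := by
  simp [extendByOne_castSuccEmb, extendByOne_succEmb, virtualBlock, twinBlock, mul_comm]

section Generators

variable {n : ℕ}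

def generatorWindow (i : Fin (n - 1)) : Fin 2 ↪ Fin n :=
  Fin.window i 2 (by omega)

theorem Smat_eq_extendByOne (i : Fin (n - 1)) :
    Smat n i = extendByOne (generatorWindow i) twinBlock := by
  ext j k
  rw [generatorWindow, extendByOne_window_two_apply]
  rfl

theorem Rmat_eq_extendByOne (i : Fin (n - 1)) (u : (LaurentPolynomial ℤ)ˣ) :
    Rmat n i u = extendByOne (generatorWindow i) (virtualBlock u) := by
  ext j k
  rw [generatorWindow, extendByOne_window_two_apply]
  rfl

theorem Smat_mul_self (i : Fin (n - 1)) : Smat n i * Smat n i = 1 := by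
  rw [Smat_eq_extendByOne, ← map_mul, twinBlock_mul_self, map_one]

theorem Rmat_mul_self (i : Fin (n - 1)) (u : (LaurentPolynomial ℤ)ˣ) :
    Rmat n i u * Rmat n i u = 1 := by
  rw [Rmat_eq_extendByOne, ← map_mul, virtualBlock_mul_self, map_one]

theorem commute_extendByOne_generatorWindow {i j : Fin (n - 1)}
    (h : i.val + 2 ≤ j.val ∨ j.val + 2 ≤ i.val)
    (A B : Matrix (Fin 2) (Fin 2) (LaurentPolynomial ℤ)) :
    Commute (extendByOne (generatorWindow i) A) (extendByOne (generatorWindow j) B) :=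
  commute_extendByOne_of_disjoint (Fin.disjoint_range_window _ _ h) A B

theorem commute_Smat_Smat {i j : Fin (n - 1)} (h : i.val + 2 ≤ j.val ∨ j.val + 2 ≤ i.val) :
    Commute (Smat n i) (Smat n j) := by
  rw [Smat_eq_extendByOne, Smat_eq_extendByOne]
  exact commute_extendByOne_generatorWindow h _ _

theorem commute_Rmat_Rmat {i j : Fin (n - 1)} (h : i.val + 2 ≤ j.val ∨ j.val + 2 ≤ i.val)
    (u : (LaurentPolynomial ℤ)ˣ) : Commute (Rmat n i u) (Rmat n j u) := by
  rw [Rmat_eq_extendByOne, Rmat_eq_extendByOne]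
  exact commute_extendByOne_generatorWindow h _ _

theorem commute_Smat_Rmat {i j : Fin (n - 1)} (h : i.val + 2 ≤ j.val ∨ j.val + 2 ≤ i.val)
    (u : (LaurentPolynomial ℤ)ˣ) : Commute (Smat n i) (Rmat n j u) := by
  rw [Smat_eq_extendByOne, Rmat_eq_extendByOne]
  exact commute_extendByOne_generatorWindow h _ _

theorem Rmat_braid {i j : Fin (n - 1)} (hij : j.val = i.val + 1) (u : (LaurentPolynomial ℤ)ˣ) :
    Rmat n i u * Rmat n j u * Rmat n i u = Rmat n j u * Rmat n i u * Rmat n j u := by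
  have h3 : i.val + 3 ≤ n := by omega
  simp only [Rmat_eq_extendByOne, generatorWindow, ← Fin.castSuccEmb_trans_window h3,
    ← Fin.succEmb_trans_window h3 _ hij, extendByOne_trans, ← map_mul, virtualBlock_braid]

theorem Rmat_Smat_mixed_braid {i j : Fin (n - 1)} (hij : j.val = i.val + 1)
    (u : (LaurentPolynomial ℤ)ˣ) :
    Rmat n i u * Rmat n j u * Smat n i = Smat n j * Rmat n i u * Rmat n j u := by
  have h3 : i.val + 3 ≤ n := by omega
  simp only [Rmat_eq_extendByOne, Smat_eq_extendByOne, generatorWindow,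
    ← Fin.castSuccEmb_trans_window h3, ← Fin.succEmb_trans_window h3 _ hij, extendByOne_trans,
    ← map_mul, virtualBlock_twinBlock_mixed_braid]

end Generators

theorem statement10_general (n : ℕ) (b : (LaurentPolynomial ℤ)ˣ) :
    ∃ h : PresentedGroup (vtRels n) →*
        Matrix.GeneralLinearGroup (Fin n) (LaurentPolynomial ℤ),
      ∀ i : Fin (n - 1),
        (h (PresentedGroup.of (Sum.inl i)) :
          Matrix (Fin n) (Fin n) (LaurentPolynomial ℤ)) = Smat n i.val ∧
        (h (PresentedGroup.of (Sum.inr i)) :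
          Matrix (Fin n) (Fin n) (LaurentPolynomial ℤ)) = Rmat n i.val b := by
  let s i : GL (Fin n) (LaurentPolynomial ℤ) := Units.mkOfMulEqOne _ _ (Smat_mul_self i)
  let ρ i : GL (Fin n) (LaurentPolynomial ℤ) := Units.mkOfMulEqOne _ _ (Rmat_mul_self i b)
  obtain ⟨h, hh⟩ := exists_hom_presentedGroup_vtRels s ρ
    (fun i => Units.ext (Smat_mul_self i))
    (fun _ _ hij => Commute.units_val_iff.mp (commute_Smat_Smat hij))
    (fun _ _ hij => Units.ext (Rmat_braid hij b))
    (fun _ _ hij => Commute.units_val_iff.mp (commute_Rmat_Rmat hij b))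
    (fun i => Units.ext (Rmat_mul_self i b))
    (fun _ _ hij => Commute.units_val_iff.mp (commute_Smat_Rmat hij b))
    (fun _ _ hij => Units.ext (Rmat_Smat_mixed_braid hij b))
  exact ⟨h, fun i => ⟨congrArg Units.val (hh i).1, congrArg Units.val (hh i).2⟩⟩

/-- For `n ≥ 3` and any unit `b` of `ℤ[t^{±1}]`, there is a group
homomorphism `ĥ : VTₙ → GLₙ(ℤ[t^{±1}])` with `ĥ(sᵢ) = Sᵢ` and with `ĥ(ρᵢ)` the matrix
agreeing with the identity except for the block `[[0, b], [b⁻¹, 0]]` in rows and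
columns `i, i+1`, for every `i`. -/
theorem statement10 (n : ℕ) (hn : 3 ≤ n) (b : (LaurentPolynomial ℤ)ˣ) :
    ∃ h : PresentedGroup (vtRels n) →*
        Matrix.GeneralLinearGroup (Fin n) (LaurentPolynomial ℤ),
      ∀ i : Fin (n - 1),
        (h (PresentedGroup.of (Sum.inl i)) :
          Matrix (Fin n) (Fin n) (LaurentPolynomial ℤ)) = Smat n i.val ∧
        (h (PresentedGroup.of (Sum.inr i)) :
          Matrix (Fin n) (Fin n) (LaurentPolynomial ℤ)) = Rmat n i.val b :=
  statement10_general n b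
end
end

section
/- Let n ≥ 3. There is no group homomorphism ĥ : WT_n → GL_n(ℤ[t^{±1}]) such that ĥ(s_i) = S_i for all 1 ≤ i ≤ n−1 and such that ĥ is 2-local, i.e. for each i, ĥ(ρ_i) agrees with the identity matrix except possibly in rows and columns i, i+1. -/
noncomputable section
open Matrix

/-- The defining relations of the welded twin group `WTₙ`: those of `VTₙ` together with
`ρᵢ s_{i+1} sᵢ = s_{i+1} sᵢ ρ_{i+1}`. -/
def wtRels (n : ℕ) : Set (FreeGroup (Fin (n - 1) ⊕ Fin (n - 1))) :=
  vtRels n ∪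
  {r | ∃ i j : Fin (n - 1), j.val = i.val + 1 ∧
        r = FreeGroup.of (Sum.inr i) * FreeGroup.of (Sum.inl j) * FreeGroup.of (Sum.inl i) *
            (FreeGroup.of (Sum.inl j) * FreeGroup.of (Sum.inl i) * FreeGroup.of (Sum.inr j))⁻¹}

/-!
All of `s₀, s₁, ρ₀, ρ₁` act as the identity beyond the first three coordinates, so the relations
`ρ₀ ρ₁ s₀ = s₁ ρ₀ ρ₁` and `ρ₀ s₁ s₀ = s₁ s₀ ρ₁` descend to the top-left `3 × 3` blocks of their
images. Comparing six entries of these block identities yields polynomial equations that force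
`t ∈ {0, 1, 2}`, which is absurd in `ℤ[t^{±1}]` (evaluate at `t = 3`).
-/

open LaurentPolynomial

theorem wtRels_rho_mul_rho_mul_s {n : ℕ} {i j : Fin (n - 1)} (hij : j.val = i.val + 1) :
    (PresentedGroup.of (.inr i) * .of (.inr j) * .of (.inl i) : PresentedGroup (wtRels n)) =
      .of (.inl j) * .of (.inr i) * .of (.inr j) :=
  PresentedGroup.mk_eq_mk_of_mul_inv_mem
    (.inl <| .inr <| .inr <| .inr <| .inr <| .inr <| .inr ⟨i, j, hij, rfl⟩)

theorem wtRels_rho_mul_s_mul_s {n : ℕ} {i j : Fin (n - 1)} (hij : j.val = i.val + 1) :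
    (PresentedGroup.of (.inr i) * .of (.inl j) * .of (.inl i) : PresentedGroup (wtRels n)) =
      .of (.inl j) * .of (.inl i) * .of (.inr j) :=
  PresentedGroup.mk_eq_mk_of_mul_inv_mem (.inr ⟨i, j, hij, rfl⟩)

section IsLocalAt

variable {R : Type*}

/-- The paper's 2-locality at the `i`-th generator (0-indexed). -/
def IsLocalAt [Zero R] [One R] {n : ℕ} (i : ℕ) (M : Matrix (Fin n) (Fin n) R) : Prop :=
  ∀ j k : Fin n, ((j.val ≠ i ∧ j.val ≠ i + 1) ∨ (k.val ≠ i ∧ k.val ≠ i + 1)) →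
    M j k = (1 : Matrix (Fin n) (Fin n) R) j k

theorem isLocalAt_Smat (n i : ℕ) : IsLocalAt i (Smat n i) := by
  intro j k hjk
  simp only [Smat, of_apply, one_apply]
  rw [if_neg (by omega), if_neg (by omega), if_neg (by omega), if_neg (by omega)]

theorem Smat_submatrix_castLE {m n : ℕ} (i : ℕ) (h : m ≤ n) :
    (Smat n i).submatrix (Fin.castLE h) (Fin.castLE h) = Smat m i := by
  ext j k
  simp [Smat, Fin.ext_iff]

theorem IsLocalAt.submatrix_castLE [Zero R] [One R] {m n i : ℕ} {M : Matrix (Fin n) (Fin n) R}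
    (hM : IsLocalAt i M) (h : m ≤ n) :
    IsLocalAt i (M.submatrix (Fin.castLE h) (Fin.castLE h)) := by
  intro j k hjk
  rw [submatrix_apply, hM _ _ hjk]
  exact congrFun (congrFun (submatrix_one _ (Fin.castLE_injective h)) j) k

theorem IsLocalAt.blockTriangular [Zero R] [One R] {m n i : ℕ} {M : Matrix (Fin n) (Fin n) R}
    (hM : IsLocalAt i M) (hi : i + 1 < m) : M.BlockTriangular fun k => decide (k.val < m) := by
  intro j k hjk
  simp only [Bool.lt_iff, decide_eq_false_iff_not, decide_eq_true_eq, not_lt] at hjk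
  rw [hM j k (Or.inr (by omega)), one_apply_ne (by rintro rfl; omega)]

end IsLocalAt

/-- The block-triangularity hypothesis says `M j k = 0` whenever `j < m ≤ k`. -/
theorem submatrix_castLE_mul {R : Type*} [NonUnitalNonAssocSemiring R] {m n : ℕ} (h : m ≤ n)
    {M : Matrix (Fin n) (Fin n) R} (hM : M.BlockTriangular fun k => decide (k.val < m))
    (N : Matrix (Fin n) (Fin n) R) :
    (M * N).submatrix (Fin.castLE h) (Fin.castLE h) =
      M.submatrix (Fin.castLE h) (Fin.castLE h) * N.submatrix (Fin.castLE h) (Fin.castLE h) := by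
  ext j k
  simp only [submatrix_apply, mul_apply]
  refine (Fintype.sum_of_injective _ (Fin.castLE_injective h) _ _ (fun l hl => ?_)
    fun l => rfl).symm
  rw [Fin.range_castLE, Set.mem_ofPred_eq, not_lt] at hl
  rw [hM (by simp [Bool.lt_iff, hl]), zero_mul]

theorem eq_zero_or_eq_one_or_eq_two_of_twin_relations {R : Type*} [CommRing R]
    [NoZeroDivisors R] {t a b c d e f g k : R}
    (hmixed : !![a, b, 0; c, d, 0; 0, 0, 1] * !![1, 0, 0; 0, e, f; 0, g, k] *
        !![1 - t, t, 0; 2 - t, t - 1, 0; 0, 0, 1] =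
      !![1, 0, 0; 0, 1 - t, t; 0, 2 - t, t - 1] *
        (!![a, b, 0; c, d, 0; 0, 0, 1] * !![1, 0, 0; 0, e, f; 0, g, k]))
    (hwelded : !![a, b, 0; c, d, 0; 0, 0, 1] *
        (!![1, 0, 0; 0, 1 - t, t; 0, 2 - t, t - 1] * !![1 - t, t, 0; 2 - t, t - 1, 0; 0, 0, 1]) =
      !![1, 0, 0; 0, 1 - t, t; 0, 2 - t, t - 1] * !![1 - t, t, 0; 2 - t, t - 1, 0; 0, 0, 1] *
        !![1, 0, 0; 0, e, f; 0, g, k]) :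
    t = 0 ∨ t = 1 ∨ t = 2 := by
  have m10 := congrFun (congrFun hmixed 1) 0
  have m11 := congrFun (congrFun hmixed 1) 1
  have m12 := congrFun (congrFun hmixed 1) 2
  have w11 := congrFun (congrFun hwelded 1) 1
  have w12 := congrFun (congrFun hwelded 1) 2
  have w22 := congrFun (congrFun hwelded 2) 2
  simp only [mul_apply, Fin.sum_univ_three, of_apply, cons_val', cons_val_zero, cons_val_one,
    cons_val_two, empty_val', cons_val_fin_one, head_cons, tail_cons, head_fin_const]
    at m10 m11 m12 w11 w12 w22
  by_contra! ht
  obtain ⟨ht0, ht1, ht2⟩ := ht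
  have hu : t - 1 ≠ 0 := sub_ne_zero.mpr ht1
  have hv : 2 - t ≠ 0 := sub_ne_zero.mpr ht2.symm
  have hw : (1 - t) * (t - 1) ≠ 0 := mul_ne_zero (sub_ne_zero.mpr ht1.symm) hu
  have hde : d * e = 0 := by
    refine (mul_eq_zero.mp (?_ : d * e * (2 - t) = 0)).resolve_right hv
    linear_combination m10
  have hcg : c = g := by
    refine sub_eq_zero.mp ((mul_eq_zero.mp (?_ : (c - g) * t = 0)).resolve_right ht0)
    linear_combination m11 - (2 * t - 2) * hde
  have hd : d = 0 := by
    have hde' : d = e := by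
      refine sub_eq_zero.mp
        ((mul_eq_zero.mp (?_ : (d - e) * ((1 - t) * (t - 1)) = 0)).resolve_right hw)
      linear_combination w11 - t * hcg
    exact mul_self_eq_zero.mp (hde' ▸ hde)
  have hk : k = 0 := by
    refine (mul_eq_zero.mp (?_ : t * k = 0)).resolve_left ht0
    linear_combination t * f * hd - m12
  have hf : f = 0 := by
    refine (mul_eq_zero.mp (?_ : (1 - t) * (t - 1) * f = 0)).resolve_left hw
    linear_combination t * hd - t * hk - w12
  exact hu (by linear_combination w22 + (2 - t) * (t - 1) * hf + (t - 1) * hk)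

theorem LaurentPolynomial.not_T_one_eq_zero_or_one_or_two :
    ¬((T 1 : ℤ[T;T⁻¹]) = 0 ∨ (T 1 : ℤ[T;T⁻¹]) = 1 ∨ (T 1 : ℤ[T;T⁻¹]) = 2) := by
  have h3 : eval₂ (Int.castRingHom ℚ) (Units.mk0 3 three_ne_zero) (T 1) = 3 := by
    simp [eval₂_T]
  rintro (h | h | h) <;> rw [h] at h3 <;> norm_num [map_ofNat] at h3

theorem not_twin_relations_fin_three {P Q : Matrix (Fin 3) (Fin 3) ℤ[T;T⁻¹]}
    (hP : IsLocalAt 0 P) (hQ : IsLocalAt 1 Q)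
    (hmixed : P * Q * Smat 3 0 = Smat 3 1 * (P * Q))
    (hwelded : P * (Smat 3 1 * Smat 3 0) = Smat 3 1 * Smat 3 0 * Q) : False := by
  have hP' : P = !![P 0 0, P 0 1, 0; P 1 0, P 1 1, 0; 0, 0, 1] := by
    ext j k; fin_cases j <;> fin_cases k <;> first | rfl | (rw [hP] <;> first | decide | simp)
  have hQ' : Q = !![1, 0, 0; 0, Q 1 1, Q 1 2; 0, Q 2 1, Q 2 2] := by
    ext j k; fin_cases j <;> fin_cases k <;> first | rfl | (rw [hQ] <;> first | decide | simp)
  have hS₀ : Smat 3 0 = !![1 - T 1, T 1, 0; 2 - T 1, T 1 - 1, 0; 0, 0, 1] := by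
    ext j k; fin_cases j <;> fin_cases k <;> simp [Smat]
  have hS₁ : Smat 3 1 = !![1, 0, 0; 0, 1 - T 1, T 1; 0, 2 - T 1, T 1 - 1] := by
    ext j k; fin_cases j <;> fin_cases k <;> simp [Smat]
  rw [hP', hQ', hS₀, hS₁] at hmixed hwelded
  exact not_T_one_eq_zero_or_one_or_two
    (eq_zero_or_eq_one_or_eq_two_of_twin_relations hmixed hwelded)

/-- For `n ≥ 3` there is no group homomorphism `ĥ : WTₙ → GLₙ(ℤ[t^{±1}])`
with `ĥ(sᵢ) = Sᵢ` for all `i` which is 2-local, i.e. such that each `ĥ(ρᵢ)` agrees with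
the identity matrix except possibly in rows and columns `i, i+1`. -/
theorem statement11 (n : ℕ) (hn : 3 ≤ n) :
    ¬∃ h : PresentedGroup (wtRels n) →*
        Matrix.GeneralLinearGroup (Fin n) (LaurentPolynomial ℤ),
      (∀ i : Fin (n - 1),
        (h (PresentedGroup.of (Sum.inl i)) :
          Matrix (Fin n) (Fin n) (LaurentPolynomial ℤ)) = Smat n i.val) ∧
      (∀ i : Fin (n - 1), ∀ j k : Fin n,
        ((j.val ≠ i.val ∧ j.val ≠ i.val + 1) ∨ (k.val ≠ i.val ∧ k.val ≠ i.val + 1)) →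
        (h (PresentedGroup.of (Sum.inr i)) :
            Matrix (Fin n) (Fin n) (LaurentPolynomial ℤ)) j k =
          (1 : Matrix (Fin n) (Fin n) (LaurentPolynomial ℤ)) j k) := by
  rintro ⟨h, hS, hloc⟩
  let i₀ : Fin (n - 1) := ⟨0, by omega⟩
  let i₁ : Fin (n - 1) := ⟨1, by omega⟩
  set P : Matrix (Fin n) (Fin n) ℤ[T;T⁻¹] := ↑(h (.of (.inr i₀)))
  set Q : Matrix (Fin n) (Fin n) ℤ[T;T⁻¹] := ↑(h (.of (.inr i₁)))
  have hmixed : P * Q * Smat n 0 = Smat n 1 * (P * Q) := by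
    simpa [hS, mul_assoc] using congrArg (fun x => (h x : Matrix (Fin n) (Fin n) ℤ[T;T⁻¹]))
      (wtRels_rho_mul_rho_mul_s (i := i₀) (j := i₁) rfl)
  have hwelded : P * (Smat n 1 * Smat n 0) = Smat n 1 * Smat n 0 * Q := by
    simpa [hS, mul_assoc] using congrArg (fun x => (h x : Matrix (Fin n) (Fin n) ℤ[T;T⁻¹]))
      (wtRels_rho_mul_s_mul_s (i := i₀) (j := i₁) rfl)
  have hP : IsLocalAt 0 P := hloc i₀
  have hQ : IsLocalAt 1 Q := hloc i₁
  have hP₃ := hP.blockTriangular (m := 3) (by norm_num)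
  have hQ₃ := hQ.blockTriangular (m := 3) (by norm_num)
  have hS₀₃ := (isLocalAt_Smat n 0).blockTriangular (m := 3) (by norm_num)
  have hS₁₃ := (isLocalAt_Smat n 1).blockTriangular (m := 3) (by norm_num)
  refine not_twin_relations_fin_three (hP.submatrix_castLE hn) (hQ.submatrix_castLE hn) ?_ ?_
  · simpa only [submatrix_castLE_mul hn (hP₃.mul hQ₃), submatrix_castLE_mul hn hP₃,
      submatrix_castLE_mul hn hS₁₃, Smat_submatrix_castLE] using
      congrArg (fun M => M.submatrix (Fin.castLE hn) (Fin.castLE hn)) hmixed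
  · simpa only [submatrix_castLE_mul hn (hS₁₃.mul hS₀₃), submatrix_castLE_mul hn hP₃,
      submatrix_castLE_mul hn hS₁₃, Smat_submatrix_castLE] using
      congrArg (fun M => M.submatrix (Fin.castLE hn) (Fin.castLE hn)) hwelded
end
end

section
/- Let n ≥ 2 and let f be any unit of ℤ[t^{±1}]. Then there exists a group homomorphism η₂ : T_n → GL_n(ℤ[t^{±1}]) such that for each 1 ≤ i ≤ n−1, η₂(s_i) = R_i(f), where R_i(f) is the n×n matrix agreeing with the identity except in rows and columns i, i+1, where it has the 2×2 block [[0, f],[f^{-1}, 0]]. -/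
/-!
Sending `sᵢ` to the transposition `(i i+1)` respects the twin relations, since adjacent
transpositions are involutions and transpositions two or more apart are disjoint. Composing with
permutation matrices gives `Tₙ → GLₙ`, and conjugating by `D = diag(f⁰, f⁻¹, …, f⁻⁽ⁿ⁻¹⁾)` turns
the permutation matrix of `(i i+1)` into `Rᵢ(f)`, because `D_{i,i} / D_{i+1,i+1} = f`.
-/

noncomputable section
open Matrix

def adjSwap {n : ℕ} (i : Fin (n - 1)) : Equiv.Perm (Fin n) :=
  Equiv.swap ⟨i, by omega⟩ ⟨i + 1, by omega⟩

theorem adjSwap_mul_self {n : ℕ} (i : Fin (n - 1)) : adjSwap i * adjSwap i = 1 :=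
  Equiv.swap_mul_self _ _

theorem adjSwap_commute {n : ℕ} {i j : Fin (n - 1)}
    (hij : i.val + 2 ≤ j.val ∨ j.val + 2 ≤ i.val) : Commute (adjSwap i) (adjSwap j) := by
  refine Equiv.ext fun k => ?_
  simp only [adjSwap, Equiv.Perm.mul_apply, Equiv.swap_apply_def]
  split_ifs <;> simp only [Fin.ext_iff] at * <;> omega

def diagonalUnits (ι R : Type*) [Fintype ι] [DecidableEq ι] [CommRing R] :
    (ι → Rˣ) →* GL ι R :=
  (Units.map (diagonalRingHom ι R : (ι → R) →* Matrix ι ι R)).comp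
    MulEquiv.piUnits.symm.toMonoidHom

theorem diagonalUnits_conj_apply {ι R : Type*} [Fintype ι] [DecidableEq ι] [CommRing R]
    (d : ι → Rˣ) (M : Matrix ι ι R) (j k : ι) :
    (diagonalUnits ι R d * M * (diagonalUnits ι R d)⁻¹ : Matrix ι ι R) j k =
      d j * M j k * ↑(d k)⁻¹ := by
  rw [← map_inv]
  simp [diagonalUnits, mul_diagonal, diagonal_mul]

namespace TwinGroup

section Lift

variable {n : ℕ} {G : Type*} [Group G] (g : Fin (n - 1) → G) (hsq : ∀ i, g i * g i = 1)
  (hcomm : ∀ i j : Fin (n - 1), i.val + 2 ≤ j.val ∨ j.val + 2 ≤ i.val → Commute (g i) (g j))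

def lift : PresentedGroup (twinRels n) →* G :=
  PresentedGroup.toGroup <| by
    rintro r (⟨i, rfl⟩ | ⟨i, j, hij, rfl⟩)
    · simpa using hsq i
    · simpa [mul_inv_eq_one, mul_inv_eq_iff_eq_mul] using (hcomm i j hij).eq

theorem lift_of (i : Fin (n - 1)) : lift g hsq hcomm (PresentedGroup.of i) = g i :=
  PresentedGroup.toGroup.of _

end Lift

def toPerm (n : ℕ) : PresentedGroup (twinRels n) →* Equiv.Perm (Fin n) :=
  lift adjSwap adjSwap_mul_self fun _ _ => adjSwap_commute

def rep (n : ℕ) {R : Type*} [CommRing R] (u : Rˣ) : PresentedGroup (twinRels n) →* GL (Fin n) R :=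
  (MulAut.conj (diagonalUnits (Fin n) R fun j => u ^ (-(j : ℤ)))).toMonoidHom.comp
    (permMatrixHom.toHomUnits.comp (toPerm n))

theorem coe_rep_of {n : ℕ} (u : (LaurentPolynomial ℤ)ˣ) (i : Fin (n - 1)) :
    (rep n u (PresentedGroup.of i) : Matrix (Fin n) (Fin n) (LaurentPolynomial ℤ)) =
      Rmat n i u := by
  refine Matrix.ext fun j k => ?_
  simp only [rep, toPerm, lift_of, MonoidHom.comp_apply, MulEquiv.coe_toMonoidHom,
    MulAut.conj_apply, Units.val_mul, MonoidHom.coe_toHomUnits, permMatrixHom_apply]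
  rw [diagonalUnits_conj_apply, mul_right_comm, ← Units.val_mul, ← _root_.zpow_neg, neg_neg,
    ← _root_.zpow_add]
  simp only [PEquiv.toMatrix_apply, Equiv.toPEquiv_apply, Option.mem_def, Option.some.injEq,
    adjSwap, Equiv.swap_inv, Equiv.swap_apply_def, Rmat, of_apply]
  split_ifs <;> simp_all [Fin.ext_iff]

end TwinGroup

theorem statement12_general (n : ℕ) (f : (LaurentPolynomial ℤ)ˣ) :
    ∃ η : PresentedGroup (twinRels n) →*
        Matrix.GeneralLinearGroup (Fin n) (LaurentPolynomial ℤ),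
      ∀ i : Fin (n - 1),
        (η (PresentedGroup.of i) : Matrix (Fin n) (Fin n) (LaurentPolynomial ℤ)) =
          Rmat n i.val f :=
  ⟨TwinGroup.rep n f, TwinGroup.coe_rep_of f⟩

/-- For `n ≥ 2` and any unit `f` of `ℤ[t^{±1}]`, there is a group
homomorphism `η₂ : Tₙ → GLₙ(ℤ[t^{±1}])` sending each generator `sᵢ` to the matrix
`Rᵢ(f)` agreeing with the identity except for the block `[[0, f], [f⁻¹, 0]]` in rows
and columns `i, i+1`. -/
theorem statement12 (n : ℕ) (hn : 2 ≤ n) (f : (LaurentPolynomial ℤ)ˣ) :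
    ∃ η : PresentedGroup (twinRels n) →*
        Matrix.GeneralLinearGroup (Fin n) (LaurentPolynomial ℤ),
      ∀ i : Fin (n - 1),
        (η (PresentedGroup.of i) : Matrix (Fin n) (Fin n) (LaurentPolynomial ℤ)) =
          Rmat n i.val f :=
  statement12_general n f
end
end

section
/- Let f be a unit of ℤ[t^{±1}] and let η₂ : T_n → GL_n(ℤ[t^{±1}]) be the homomorphism with η₂(s_i) = R_i(f) for all i. Then η₂ is injective for n = 2, and for every n ≥ 3 it is not injective; in fact for n ≥ 3 one has η₂((s_1 s_2)³) = 1 while (s_1 s_2)³ ≠ 1 in T_n. -/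
noncomputable section
open Matrix

/-!
Conjugation by `diag(1, f, f², …)` turns `Rᵢ(f)` into the permutation matrix of the transposition
`(i i+1)`, so the image of `s₀s₁` is conjugate to the permutation matrix of a 3-cycle and its cube
is `1`. In `Tₙ`, however, `s₀ ↦ (x ↦ -x)`, `s₁ ↦ (x ↦ 1 - x)` and `sᵢ ↦ 1` for `i ≥ 2` define a map
to the infinite dihedral group sending `s₀s₁` to a translation, so `(s₀s₁)³ ≠ 1`. For `n = 2`,
`T₂ = {1, s₀}` and `R₀(f) ≠ 1`.
-/

open Equiv

section TwinGroup

variable {n : ℕ}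

lemma twinGroup_of_mul_self (i : Fin (n - 1)) :
    (PresentedGroup.of i : PresentedGroup (twinRels n)) * PresentedGroup.of i = 1 :=
  PresentedGroup.one_of_mem (Or.inl ⟨i, rfl⟩)

lemma twinRels_lift_eq_one {G : Type*} [Group G] {g : Fin (n - 1) → G}
    (hsq : ∀ i, g i * g i = 1)
    (hcomm : ∀ i j : Fin (n - 1), i.val + 2 ≤ j.val → Commute (g i) (g j)) :
    ∀ r ∈ twinRels n, FreeGroup.lift g r = 1 := by
  rintro r (⟨i, rfl⟩ | ⟨i, j, hij, rfl⟩)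
  · simpa using hsq i
  · have hc : Commute (g i) (g j) := hij.elim (hcomm i j) fun h => (hcomm j i h).symm
    simp [hc.eq]

lemma twinGroup_two_eq_one_or_eq_of (x : PresentedGroup (twinRels 2)) :
    x = 1 ∨ x = PresentedGroup.of 0 := by
  have hx : x ∈ Subgroup.zpowers (PresentedGroup.of 0) :=
    PresentedGroup.generated_by _ _
      (fun j => (Fin.ext (Nat.lt_one_iff.mp j.isLt) : j = 0) ▸ Subgroup.mem_zpowers _) x
  obtain ⟨k, rfl⟩ := Subgroup.mem_zpowers_iff.mp hx
  obtain ⟨m, rfl | rfl⟩ := Int.even_or_odd' k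
  · left
    rw [_root_.zpow_mul, zpow_two, twinGroup_of_mul_self, _root_.one_zpow]
  · right
    rw [_root_.zpow_add_one, _root_.zpow_mul, zpow_two, twinGroup_of_mul_self, _root_.one_zpow,
      one_mul]

lemma injective_of_twinGroup_two {G : Type*} [Group G] (η : PresentedGroup (twinRels 2) →* G)
    (h : η (PresentedGroup.of 0) ≠ 1) : Function.Injective η :=
  (injective_iff_map_eq_one η).mpr fun x hx =>
    (twinGroup_two_eq_one_or_eq_of x).resolve_right fun hx0 => h (hx0 ▸ hx)

open DihedralGroup in
def dihedralGen (i : Fin (n - 1)) : DihedralGroup 0 :=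
  if i.val = 0 then sr 0 else if i.val = 1 then sr 1 else 1

lemma dihedralGen_mul_self (i : Fin (n - 1)) : dihedralGen i * dihedralGen i = 1 := by
  unfold dihedralGen
  split_ifs <;> simp

lemma twinRels_lift_dihedralGen : ∀ r ∈ twinRels n, FreeGroup.lift dihedralGen r = 1 :=
  twinRels_lift_eq_one dihedralGen_mul_self fun i j hij => by
    simp [dihedralGen, show j.val ≠ 0 by omega, show j.val ≠ 1 by omega]

lemma twinGroup_of_mul_of_pow_three_ne_one {a b : Fin (n - 1)} (ha : a.val = 0)
    (hb : b.val = 1) :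
    (PresentedGroup.of a * PresentedGroup.of b) ^ 3 ≠ (1 : PresentedGroup (twinRels n)) := by
  intro h
  have := congrArg (PresentedGroup.toGroup twinRels_lift_dihedralGen) h
  simp [dihedralGen, ha, hb, DihedralGroup.sr_mul_sr] at this
  rw [DihedralGroup.one_def, DihedralGroup.r.injEq] at this
  exact absurd this (by decide)

end TwinGroup

section Rmat

variable {R : Type*} [CommRing R]

def diagPowers (n : ℕ) (u : Rˣ) : (Matrix (Fin n) (Fin n) R)ˣ where
  val := diagonal fun j => ↑(u ^ (j : ℕ))
  inv := diagonal fun j => ↑(u⁻¹ ^ (j : ℕ))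
  val_inv := by simp [← diagonal_one, ← mul_pow]
  inv_val := by simp [← diagonal_one, ← mul_pow]

lemma rmat_eq_conj_permMatrix {n i : ℕ} (hi : i + 1 < n) (u : (LaurentPolynomial ℤ)ˣ) :
    Rmat n i u = (↑((diagPowers n u)⁻¹) : Matrix (Fin n) (Fin n) (LaurentPolynomial ℤ)) *
      (swap (⟨i, by omega⟩ : Fin n) ⟨i + 1, hi⟩).permMatrix (LaurentPolynomial ℤ) *
        (diagPowers n u : Matrix (Fin n) (Fin n) (LaurentPolynomial ℤ)) := by
  ext ⟨j, hj⟩ ⟨k, hk⟩ : 1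
  simp only [Rmat, diagPowers, of_apply, Units.inv_mk, mul_diagonal, diagonal_mul,
    PEquiv.toMatrix_apply, toPEquiv_apply, swap_apply_def, Option.mem_def, Option.some.injEq,
    Fin.ext_iff, mul_ite, ite_mul, mul_one, mul_zero, zero_mul]
  split_ifs <;> simp_all [pow_succ, ← mul_assoc, ← mul_pow,
    mul_right_comm _ (↑u⁻¹ : LaurentPolynomial ℤ)]

lemma rmat_ne_one {n i : ℕ} (hi : i + 1 < n) (u : (LaurentPolynomial ℤ)ˣ) : Rmat n i u ≠ 1 := by
  intro h
  simpa [Rmat] using congrFun (congrFun h ⟨i, by omega⟩) ⟨i, by omega⟩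

lemma swap_mul_swap_pow_three {α : Type*} [DecidableEq α] [Fintype α] {a b c : α}
    (hab : a ≠ b) (hac : a ≠ c) (hbc : b ≠ c) : (swap a b * swap a c) ^ 3 = 1 :=
  (Perm.isThreeCycle_swap_mul_swap_same hab hac hbc).orderOf ▸ pow_orderOf_eq_one _

lemma permMatrix_pow {ι : Type*} [DecidableEq ι] [Fintype ι] (σ : Perm ι) (k : ℕ) :
    σ.permMatrix R ^ k = (σ ^ k).permMatrix R := by
  induction k with
  | zero => simp
  | succ k ih => rw [pow_succ', ih, pow_succ, permMatrix_mul]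

lemma rmat_zero_mul_rmat_one_pow_three {n : ℕ} (hn : 3 ≤ n) (u : (LaurentPolynomial ℤ)ˣ) :
    (Rmat n 0 u * Rmat n 1 u) ^ 3 = 1 := by
  let a : Fin n := ⟨0, by omega⟩
  let b : Fin n := ⟨1, by omega⟩
  let c : Fin n := ⟨2, by omega⟩
  have hσ : (swap b c * swap b a) ^ 3 = 1 :=
    swap_mul_swap_pow_three (Fin.ne_of_val_ne (by simp [b, c]))
      (Fin.ne_of_val_ne (by simp [a, b])) (Fin.ne_of_val_ne (by simp [a, c]))
  rw [rmat_eq_conj_permMatrix (i := 0) (by omega), rmat_eq_conj_permMatrix (i := 1) (by omega)]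
  calc _ = ((↑((diagPowers n u)⁻¹) : Matrix (Fin n) (Fin n) (LaurentPolynomial ℤ)) *
        (swap b c * swap a b).permMatrix (LaurentPolynomial ℤ) * ↑(diagPowers n u)) ^ 3 := by
        simp [mul_assoc, a, b, c]
    _ = 1 := by
        rw [Units.conj_pow', permMatrix_pow, Equiv.swap_comm a b, hσ]
        simp

end Rmat

/-- For a unit `f` of `ℤ[t^{±1}]`, the homomorphism
`η₂ : Tₙ → GLₙ(ℤ[t^{±1}])` with `η₂(sᵢ) = Rᵢ(f)` is injective for `n = 2`, and for
every `n ≥ 3` it is not injective: indeed `η₂((s₁s₂)³) = 1` while `(s₁s₂)³ ≠ 1`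
in `Tₙ` (0-indexed, `s₁s₂` is `s₀s₁`). -/
theorem statement13 (f : (LaurentPolynomial ℤ)ˣ) :
    (∀ η : PresentedGroup (twinRels 2) →*
        Matrix.GeneralLinearGroup (Fin 2) (LaurentPolynomial ℤ),
      (∀ i : Fin (2 - 1),
        (η (PresentedGroup.of i) : Matrix (Fin 2) (Fin 2) (LaurentPolynomial ℤ)) =
          Rmat 2 i.val f) →
      Function.Injective η) ∧
    (∀ n : ℕ, ∀ hn : 3 ≤ n,
      ∀ η : PresentedGroup (twinRels n) →*
          Matrix.GeneralLinearGroup (Fin n) (LaurentPolynomial ℤ),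
        (∀ i : Fin (n - 1),
          (η (PresentedGroup.of i) : Matrix (Fin n) (Fin n) (LaurentPolynomial ℤ)) =
            Rmat n i.val f) →
        ¬Function.Injective η ∧
        η ((PresentedGroup.of (⟨0, by omega⟩ : Fin (n - 1)) *
            PresentedGroup.of (⟨1, by omega⟩ : Fin (n - 1))) ^ 3) = 1 ∧
        (PresentedGroup.of (⟨0, by omega⟩ : Fin (n - 1)) *
            PresentedGroup.of (⟨1, by omega⟩ : Fin (n - 1))) ^ 3 ≠
          (1 : PresentedGroup (twinRels n))) := by
  refine ⟨fun η hη => injective_of_twinGroup_two η fun h => ?_, fun n hn η hη => ?_⟩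
  · exact rmat_ne_one (n := 2) (i := 0) (by norm_num) f (by simpa [h] using (hη 0).symm)
  · have hcube : η ((PresentedGroup.of (⟨0, by omega⟩ : Fin (n - 1)) *
        PresentedGroup.of (⟨1, by omega⟩ : Fin (n - 1))) ^ 3) = 1 :=
      Units.ext <| by simpa [hη] using rmat_zero_mul_rmat_one_pow_three hn f
    have hne := twinGroup_of_mul_of_pow_three_ne_one (n := n) (a := ⟨0, by omega⟩)
      (b := ⟨1, by omega⟩) rfl rfl
    exact ⟨fun hinj => hne (hinj (hcube.trans (map_one η).symm)), hcube, hne⟩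
end
end

section
/- Let n ≥ 3 and let f, g be units of ℤ[t^{±1}]. Then there exists a group homomorphism ĥ : WT_n → GL_n(ℤ[t^{±1}]) such that for every 1 ≤ i ≤ n−1, ĥ(s_i) = R_i(f) and ĥ(ρ_i) = R_i(g), where R_i(u) denotes the n×n matrix agreeing with the identity except in rows and columns i, i+1, where it has the 2×2 block [[0, u],[u^{-1}, 0]]. -/
noncomputable section
open Matrix

/-!
Each `Rᵢ(u)` is a monomial matrix: the permutation matrix of the transposition `(i i+1)` times
a diagonal matrix of units. Monomial matrices multiply by composing the permutations and
twisting the diagonals, so every defining relation of `WTₙ` splits into the corresponding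
relation between transpositions in `Sₙ` and an identity between diagonal entries. The relation
`ρᵢ s_{i+1} sᵢ = s_{i+1} sᵢ ρ_{i+1}` needs no separate computation: all the matrices
are involutions, and it is the inverse of the identity behind
`ρᵢ ρ_{i+1} sᵢ = s_{i+1} ρᵢ ρ_{i+1}` with `f` and `g` exchanged.
-/

open Equiv (Perm swap_apply_def swap_mul_swap_mul_swap)

section MonomialMatrix

variable {ι R : Type*} [DecidableEq ι]

def monomialMatrix [Zero R] (σ : Perm ι) (d : ι → R) : Matrix ι ι R :=
  of fun j k => if j = σ k then d k else 0

theorem monomialMatrix_one [Zero R] [One R] :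
    monomialMatrix (1 : Perm ι) (1 : ι → R) = 1 := by
  ext j k
  simp only [monomialMatrix, of_apply, Pi.one_apply, one_apply]
  rfl

variable [Fintype ι]

theorem monomialMatrix_mul [NonUnitalNonAssocSemiring R] (σ τ : Perm ι) (d e : ι → R) :
    monomialMatrix σ d * monomialMatrix τ e =
      monomialMatrix (σ * τ) (fun k => d (τ k) * e k) := by
  ext j k
  rw [mul_apply, Finset.sum_eq_single (τ k)]
  · simp only [monomialMatrix, of_apply, ite_mul, zero_mul]
    rfl
  · intro l _ hl
    simp [monomialMatrix, hl]
  · simp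

end MonomialMatrix

section TwistedSwap

variable {ι R : Type*} [DecidableEq ι] [Fintype ι] [CommSemiring R]

/-- The permutation matrix of `(a b)` with the entries at `(a, b)` and `(b, a)` replaced by
`u` and `u⁻¹`; `Rmat n i u` is the case `a = i`, `b = i + 1`. -/
def twistedSwap (a b : ι) (u : Rˣ) : Matrix ι ι R :=
  monomialMatrix (Equiv.swap a b) (Pi.mulSingle a (↑u⁻¹ : R) * Pi.mulSingle b (u : R))

theorem twistedSwap_mul_self (a b : ι) (u : Rˣ) :
    twistedSwap a b u * twistedSwap a b u = 1 := by
  rw [twistedSwap, monomialMatrix_mul, Equiv.swap_mul_self, ← monomialMatrix_one]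
  congr 1
  funext k
  simp only [Pi.mul_apply, Pi.mulSingle_apply, swap_apply_def, Pi.one_apply]
  split_ifs <;> simp_all

theorem twistedSwap_mul_comm {a b c d : ι} (hac : a ≠ c) (had : a ≠ d) (hbc : b ≠ c)
    (hbd : b ≠ d) (u v : Rˣ) :
    twistedSwap a b u * twistedSwap c d v = twistedSwap c d v * twistedSwap a b u := by
  have hperm : Equiv.swap a b * Equiv.swap c d = Equiv.swap c d * Equiv.swap a b := by
    ext x
    simp only [Perm.mul_apply, swap_apply_def]
    split_ifs <;> simp_all
  rw [twistedSwap, twistedSwap, monomialMatrix_mul, monomialMatrix_mul, hperm]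
  congr 1
  funext k
  simp only [Pi.mul_apply, Pi.mulSingle_apply, swap_apply_def]
  split_ifs <;> simp_all

theorem twistedSwap_braid {a b c : ι} (hab : a ≠ b) (hac : a ≠ c) (hbc : b ≠ c) (u v : Rˣ) :
    twistedSwap a b u * twistedSwap b c u * twistedSwap a b v =
      twistedSwap b c v * twistedSwap a b u * twistedSwap b c u := by
  have hperm : Equiv.swap a b * Equiv.swap b c * Equiv.swap a b =
      Equiv.swap b c * Equiv.swap a b * Equiv.swap b c := by
    rw [swap_mul_swap_mul_swap hab hac, Equiv.swap_comm a b, Equiv.swap_comm b c,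
      swap_mul_swap_mul_swap hbc.symm hac.symm, Equiv.swap_comm]
  simp only [twistedSwap, monomialMatrix_mul, hperm]
  congr 1
  funext k
  simp only [Pi.mul_apply, Pi.mulSingle_apply, swap_apply_def]
  split_ifs <;> simp_all <;> ring

def twistedSwapGL (a b : ι) (u : Rˣ) : GL ι R :=
  ⟨twistedSwap a b u, twistedSwap a b u, twistedSwap_mul_self a b u, twistedSwap_mul_self a b u⟩

theorem twistedSwapGL_mul_self (a b : ι) (u : Rˣ) :
    twistedSwapGL a b u * twistedSwapGL a b u = (1 : GL ι R) :=
  Units.ext (twistedSwap_mul_self a b u)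

theorem twistedSwapGL_inv (a b : ι) (u : Rˣ) :
    (twistedSwapGL a b u)⁻¹ = (twistedSwapGL a b u : GL ι R) :=
  rfl

theorem twistedSwapGL_mul_comm {a b c d : ι} (hac : a ≠ c) (had : a ≠ d) (hbc : b ≠ c)
    (hbd : b ≠ d) (u v : Rˣ) :
    twistedSwapGL a b u * twistedSwapGL c d v =
      (twistedSwapGL c d v * twistedSwapGL a b u : GL ι R) :=
  Units.ext (twistedSwap_mul_comm hac had hbc hbd u v)

theorem twistedSwapGL_braid {a b c : ι} (hab : a ≠ b) (hac : a ≠ c) (hbc : b ≠ c)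
    (u v : Rˣ) :
    twistedSwapGL a b u * twistedSwapGL b c u * twistedSwapGL a b v =
      (twistedSwapGL b c v * twistedSwapGL a b u * twistedSwapGL b c u : GL ι R) :=
  Units.ext (twistedSwap_braid hab hac hbc u v)

theorem twistedSwapGL_braid' {a b c : ι} (hab : a ≠ b) (hac : a ≠ c) (hbc : b ≠ c)
    (u v : Rˣ) :
    twistedSwapGL a b u * twistedSwapGL b c v * twistedSwapGL a b v =
      (twistedSwapGL b c v * twistedSwapGL a b v * twistedSwapGL b c u : GL ι R) := by
  simpa only [_root_.mul_inv_rev, twistedSwapGL_inv, mul_assoc] using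
    congrArg (·⁻¹) (twistedSwapGL_braid hab hac hbc v u)

end TwistedSwap

section AdjacentTwistedSwap

variable {R : Type*} [CommSemiring R] {n : ℕ}

def adjTwistedSwap (i : Fin (n - 1)) (u : Rˣ) : GL (Fin n) R :=
  twistedSwapGL ⟨i, by omega⟩ ⟨i + 1, by omega⟩ u

theorem adjTwistedSwap_mul_comm {i j : Fin (n - 1)}
    (hij : i.val + 2 ≤ j.val ∨ j.val + 2 ≤ i.val) (u v : Rˣ) :
    adjTwistedSwap i u * adjTwistedSwap j v =
      (adjTwistedSwap j v * adjTwistedSwap i u : GL _ R) := by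
  apply twistedSwapGL_mul_comm <;> exact Fin.ne_of_val_ne (by dsimp only; omega)

theorem adjTwistedSwap_braid {i j : Fin (n - 1)} (hj : j.val = i.val + 1) (u v : Rˣ) :
    adjTwistedSwap i u * adjTwistedSwap j u * adjTwistedSwap i v =
      (adjTwistedSwap j v * adjTwistedSwap i u * adjTwistedSwap j u : GL _ R) := by
  obtain ⟨j, hj'⟩ := j
  subst hj
  apply twistedSwapGL_braid <;> exact Fin.ne_of_val_ne (by dsimp only; omega)

theorem adjTwistedSwap_braid' {i j : Fin (n - 1)} (hj : j.val = i.val + 1) (u v : Rˣ) :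
    adjTwistedSwap i u * adjTwistedSwap j v * adjTwistedSwap i v =
      (adjTwistedSwap j v * adjTwistedSwap i v * adjTwistedSwap j u : GL _ R) := by
  obtain ⟨j, hj'⟩ := j
  subst hj
  apply twistedSwapGL_braid' <;> exact Fin.ne_of_val_ne (by dsimp only; omega)

theorem lift_adjTwistedSwap_wtRels (f g : Rˣ) {r : FreeGroup (Fin (n - 1) ⊕ Fin (n - 1))}
    (hr : r ∈ wtRels n) :
    FreeGroup.lift (Sum.elim (adjTwistedSwap · f) (adjTwistedSwap · g) : _ → GL (Fin n) R) r =
      1 := by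
  rcases hr with (⟨i, rfl⟩ | ⟨i, j, hij, rfl⟩ | ⟨i, j, hj, rfl⟩ | ⟨i, j, hij, rfl⟩ |
    ⟨i, rfl⟩ | ⟨i, j, hij, rfl⟩ | ⟨i, j, hj, rfl⟩) | ⟨i, j, hj, rfl⟩
  all_goals simp only [map_mul, map_inv, FreeGroup.lift_apply_of, Sum.elim_inl, Sum.elim_inr]
  · exact twistedSwapGL_mul_self _ _ f
  · exact commutatorElement_eq_one_iff_mul_comm.mpr (adjTwistedSwap_mul_comm hij f f)
  · exact mul_inv_eq_one.mpr (adjTwistedSwap_braid hj g g)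
  · exact commutatorElement_eq_one_iff_mul_comm.mpr (adjTwistedSwap_mul_comm hij g g)
  · exact twistedSwapGL_mul_self _ _ g
  · exact commutatorElement_eq_one_iff_mul_comm.mpr (adjTwistedSwap_mul_comm hij f g)
  · exact mul_inv_eq_one.mpr (adjTwistedSwap_braid hj g f)
  · exact mul_inv_eq_one.mpr (adjTwistedSwap_braid' hj g f)

end AdjacentTwistedSwap

theorem Rmat_eq_adjTwistedSwap {n : ℕ} (i : Fin (n - 1)) (u : (LaurentPolynomial ℤ)ˣ) :
    Rmat n i.val u = (adjTwistedSwap i u : Matrix (Fin n) (Fin n) (LaurentPolynomial ℤ)) := by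
  ext j k
  simp only [Rmat, adjTwistedSwap, twistedSwapGL, twistedSwap, monomialMatrix, of_apply,
    Pi.mul_apply, Pi.mulSingle_apply, swap_apply_def, Fin.ext_iff]
  split_ifs <;> simp_all

theorem statement15_general (n : ℕ) (f g : (LaurentPolynomial ℤ)ˣ) :
    ∃ h : PresentedGroup (wtRels n) →*
        Matrix.GeneralLinearGroup (Fin n) (LaurentPolynomial ℤ),
      ∀ i : Fin (n - 1),
        (h (PresentedGroup.of (Sum.inl i)) :
          Matrix (Fin n) (Fin n) (LaurentPolynomial ℤ)) = Rmat n i.val f ∧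
        (h (PresentedGroup.of (Sum.inr i)) :
          Matrix (Fin n) (Fin n) (LaurentPolynomial ℤ)) = Rmat n i.val g := by
  refine ⟨PresentedGroup.toGroup fun r hr => lift_adjTwistedSwap_wtRels f g hr,
    fun i => ⟨?_, ?_⟩⟩ <;>
  rw [PresentedGroup.toGroup.of, Rmat_eq_adjTwistedSwap] <;> rfl

/-- For `n ≥ 3` and any units `f, g` of `ℤ[t^{±1}]`, there is a group
homomorphism `ĥ : WTₙ → GLₙ(ℤ[t^{±1}])` with `ĥ(sᵢ) = Rᵢ(f)` and `ĥ(ρᵢ) = Rᵢ(g)` for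
every `i`, where `Rᵢ(u)` agrees with the identity except for the block
`[[0, u], [u⁻¹, 0]]` in rows and columns `i, i+1`. -/
theorem statement15 (n : ℕ) (hn : 3 ≤ n) (f g : (LaurentPolynomial ℤ)ˣ) :
    ∃ h : PresentedGroup (wtRels n) →*
        Matrix.GeneralLinearGroup (Fin n) (LaurentPolynomial ℤ),
      ∀ i : Fin (n - 1),
        (h (PresentedGroup.of (Sum.inl i)) :
          Matrix (Fin n) (Fin n) (LaurentPolynomial ℤ)) = Rmat n i.val f ∧
        (h (PresentedGroup.of (Sum.inr i)) :
          Matrix (Fin n) (Fin n) (LaurentPolynomial ℤ)) = Rmat n i.val g :=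
  statement15_general n f g
end
end

section
/- Let n ≥ 3, let f be a unit of ℤ[t^{±1}], and let ĥ : WT_n → GL_n(ℤ[t^{±1}]) be a group homomorphism such that ĥ(s_i) = R_i(f) for all 1 ≤ i ≤ n−1 and such that ĥ is 2-local, i.e. for each i, ĥ(ρ_i) agrees with the identity matrix except possibly in rows and columns i, i+1. Then there exists a unit g of ℤ[t^{±1}] such that for every 1 ≤ i ≤ n−1, ĥ(ρ_i) = R_i(g), where R_i(u) denotes the n×n matrix agreeing with the identity except in rows and columns i, i+1, where it has the 2×2 block [[0, u],[u^{-1}, 0]]. -/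
/-!
Let `B` be the `2 × 2` block of `ĥ(ρ₀)` on rows and columns `0, 1`. The relation
`ρᵢ sᵢ₊₁ sᵢ = sᵢ₊₁ sᵢ ρᵢ₊₁` says that `ĥ(ρᵢ₊₁)` is the conjugate of `ĥ(ρᵢ)` by `Rᵢ₊₁(f) Rᵢ(f)`,
a weighted cyclic permutation of the basis vectors `eᵢ, eᵢ₊₁, eᵢ₊₂`; hence every `ĥ(ρᵢ)` has
the block `B` at position `i`. The relation `ρ₀² = 1` gives `B² = 1`, and the `(1, 0)` entry of
`ρ₀ ρ₁ s₀ = s₁ ρ₀ ρ₁` gives `B₁₁ B₀₀ = 0`. In the domain `ℤ[t^{±1}]` these force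
`B = [[0, g], [g⁻¹, 0]]` for a unit `g`, and a 2-local matrix is determined by its block.
-/
noncomputable section
open Matrix

open LaurentPolynomial

namespace Matrix

variable {l m o R : Type*} [Fintype m] [DecidableEq m] [NonUnitalNonAssocSemiring R]

theorem mul_row_eq_of_row_eq_single {A : Matrix l m R} {p : l} {k : m} {c : R}
    (hA : A p = Pi.single k c) (X : Matrix m o R) : (A * X) p = c • X k := by
  rw [mul_apply_eq_vecMul, hA, single_vecMul, row]

theorem mul_apply_of_row_eq_single {A : Matrix l m R} {p : l} {k : m} {c : R}
    (hA : A p = Pi.single k c) (X : Matrix m o R) (q : o) : (A * X) p q = c * X k q :=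
  congrFun (mul_row_eq_of_row_eq_single hA X) q

theorem mul_apply_of_col_eq_single {A : Matrix m o R} {q : o} {k : m} {c : R}
    (hA : Aᵀ q = Pi.single k c) (X : Matrix l m R) (p : l) : (X * A) p q = X p k * c := by
  rw [mul_apply]
  simp only [← transpose_apply A, hA, Pi.single_apply, mul_ite, mul_zero, Finset.sum_ite_eq',
    Finset.mem_univ, if_true]

end Matrix

section Rmat

variable {n i : ℕ} (u : (ℤ[T;T⁻¹])ˣ)

theorem Rmat_transpose : (Rmat n i u)ᵀ = Rmat n i u⁻¹ := by
  ext j k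
  simp only [Rmat, transpose_apply, of_apply, inv_inv, Fin.ext_iff]
  split_ifs <;> first | rfl | omega

theorem Rmat_row_of_val_eq {p q : Fin n} (hp : p.val = i) (hq : q.val = i + 1) :
    Rmat n i u p = Pi.single q ↑u := by
  ext k
  simp only [Rmat, of_apply, Pi.single_apply, Fin.ext_iff]
  split_ifs <;> first | rfl | omega

theorem Rmat_row_of_val_eq_succ {p q : Fin n} (hp : p.val = i + 1) (hq : q.val = i) :
    Rmat n i u p = Pi.single q ↑u⁻¹ := by
  ext k
  simp only [Rmat, of_apply, Pi.single_apply, Fin.ext_iff]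
  split_ifs <;> first | rfl | omega

theorem Rmat_row_of_val_ne {p : Fin n} (hp : p.val ≠ i) (hp' : p.val ≠ i + 1) :
    Rmat n i u p = Pi.single p 1 := by
  ext k
  simp only [Rmat, of_apply, Pi.single_apply, Fin.ext_iff]
  split_ifs <;> first | rfl | omega

end Rmat

section TwoLocal

variable {n : ℕ} {R : Type*}

def IsTwoLocal [Zero R] [One R] (i : ℕ) (M : Matrix (Fin n) (Fin n) R) : Prop :=
  ∀ j k : Fin n, ((j.val ≠ i ∧ j.val ≠ i + 1) ∨ (k.val ≠ i ∧ k.val ≠ i + 1)) →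
    M j k = (1 : Matrix (Fin n) (Fin n) R) j k

def blockAt (M : Matrix (Fin n) (Fin n) R) (i : ℕ) (hi : i + 1 < n) : Matrix (Fin 2) (Fin 2) R :=
  M.submatrix (fun a => ⟨i + a, by omega⟩) (fun a => ⟨i + a, by omega⟩)

theorem blockAt_one [Zero R] [One R] {i : ℕ} (hi : i + 1 < n) :
    blockAt (1 : Matrix (Fin n) (Fin n) R) i hi = 1 :=
  submatrix_one _ fun a b hab => Fin.ext (by simpa [Fin.ext_iff] using hab)

namespace IsTwoLocal

variable [Zero R] [One R] {i : ℕ} {M : Matrix (Fin n) (Fin n) R}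

theorem row_eq_single_of_val_ne (hM : IsTwoLocal i M) {p : Fin n} (hp : p.val ≠ i)
    (hp' : p.val ≠ i + 1) : M p = Pi.single p 1 := by
  ext k
  rw [hM p k (Or.inl ⟨hp, hp'⟩), one_apply, Pi.single_apply]
  exact if_congr eq_comm rfl rfl

theorem ext_blockAt {N : Matrix (Fin n) (Fin n) R} (hM : IsTwoLocal i M) (hN : IsTwoLocal i N)
    (hi : i + 1 < n) (h : blockAt M i hi = blockAt N i hi) : M = N := by
  ext j k
  by_cases hjk : (j.val = i ∨ j.val = i + 1) ∧ (k.val = i ∨ k.val = i + 1)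
  · have hblock : ∀ l : Fin n, (l.val = i ∨ l.val = i + 1) →
        ∃ a : Fin 2, (⟨i + a, by omega⟩ : Fin n) = l :=
      fun l hl => ⟨⟨l - i, by omega⟩, Fin.ext (by simp only; omega)⟩
    obtain ⟨a, rfl⟩ := hblock j hjk.1
    obtain ⟨b, rfl⟩ := hblock k hjk.2
    exact congrFun (congrFun h a) b
  · rw [hM j k (by omega), hN j k (by omega)]

theorem blockAt_mul {R : Type*} [NonAssocSemiring R] {M : Matrix (Fin n) (Fin n) R}
    (hM : IsTwoLocal i M) (hi : i + 1 < n) (X : Matrix (Fin n) (Fin n) R) :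
    blockAt (M * X) i hi = blockAt M i hi * blockAt X i hi := by
  ext a b
  have hout : ∀ l : Fin n, l.val ≠ i ∧ l.val ≠ i + 1 →
      M ⟨i + a, by omega⟩ l * X l ⟨i + b, by omega⟩ = 0 := by
    intro l hl
    rw [hM _ l (Or.inr hl), one_apply_ne (by simp only [ne_eq, Fin.ext_iff]; omega), zero_mul]
  simp only [blockAt, submatrix_apply, mul_apply, Fin.sum_univ_two]
  rw [Fintype.sum_eq_add ⟨i, by omega⟩ ⟨i + 1, hi⟩ (by simp [Fin.ext_iff])
    (fun l hl => hout l ⟨fun h => hl.1 (Fin.ext h), fun h => hl.2 (Fin.ext h)⟩)]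
  rfl

end IsTwoLocal

end TwoLocal

section RmatTwoLocal

variable {n i : ℕ} (u : (ℤ[T;T⁻¹])ˣ)

theorem isTwoLocal_Rmat : IsTwoLocal i (Rmat n i u) := by
  intro j k hjk
  simp only [Rmat, of_apply, one_apply]
  split_ifs <;> first | rfl | omega

theorem blockAt_Rmat (hi : i + 1 < n) : blockAt (Rmat n i u) i hi = !![0, ↑u; ↑u⁻¹, 0] := by
  ext a b
  fin_cases a <;> fin_cases b <;> simp [blockAt, Rmat]

end RmatTwoLocal

section RmatProduct

variable {n i : ℕ} (u : (ℤ[T;T⁻¹])ˣ)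

theorem Rmat_succ_mul_Rmat_row {p p' : Fin n} (hp : p.val = i ∨ p.val = i + 1)
    (hp' : p'.val = p.val + 1) : (Rmat n (i + 1) u * Rmat n i u) p = Pi.single p' ↑u := by
  rcases hp with hp | hp
  · rw [mul_row_eq_of_row_eq_single (Rmat_row_of_val_ne u (i := i + 1) (p := p) (by omega)
      (by omega)), one_smul, Rmat_row_of_val_eq u hp (q := p') (by omega)]
  · rw [mul_row_eq_of_row_eq_single (Rmat_row_of_val_eq u hp (q := p') (by omega)),
      Rmat_row_of_val_ne u (by omega) (by omega), ← Pi.single_smul, smul_eq_mul, mul_one]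

theorem Rmat_succ_mul_Rmat_col {q q' : Fin n} (hq : q.val = i ∨ q.val = i + 1)
    (hq' : q'.val = q.val + 1) : (Rmat n (i + 1) u * Rmat n i u)ᵀ q' = Pi.single q ↑u := by
  rw [transpose_mul, Rmat_transpose, Rmat_transpose]
  rcases hq with hq | hq
  · rw [mul_row_eq_of_row_eq_single (Rmat_row_of_val_eq_succ u⁻¹ (by omega) hq),
      Rmat_row_of_val_ne u⁻¹ (by omega) (by omega), ← Pi.single_smul, smul_eq_mul, mul_one,
      inv_inv]
  · rw [mul_row_eq_of_row_eq_single (Rmat_row_of_val_ne u⁻¹ (i := i) (p := q') (by omega)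
      (by omega)), one_smul, Rmat_row_of_val_eq_succ u⁻¹ (by omega) hq, inv_inv]

end RmatProduct

theorem Matrix.exists_eq_antidiag_of_mul_self_eq_one {R : Type*} [CommRing R] [NoZeroDivisors R]
    {B : Matrix (Fin 2) (Fin 2) R} (hB : B * B = 1) (h : B 1 1 * B 0 0 = 0) :
    ∃ u : Rˣ, B = !![0, ↑u; ↑u⁻¹, 0] := by
  have h00 := congrFun (congrFun hB 0) 0
  have h11 := congrFun (congrFun hB 1) 1
  simp only [mul_apply, Fin.sum_univ_two, one_apply_eq] at h00 h11
  obtain ⟨ha, hd⟩ : B 0 0 = 0 ∧ B 1 1 = 0 := by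
    rcases mul_eq_zero.mp h with hd | ha
    · refine ⟨mul_self_eq_zero.mp ?_, hd⟩
      rw [hd] at h11
      linear_combination h00 - h11
    · refine ⟨ha, mul_self_eq_zero.mp ?_⟩
      rw [ha] at h00
      linear_combination h11 - h00
  rw [ha] at h00
  rw [hd] at h11
  rw [eta_fin_two B, ha, hd]
  exact ⟨⟨B 0 1, B 1 0, by linear_combination h00, by linear_combination h11⟩, rfl⟩

section Relations

variable {n i : ℕ} (u : (ℤ[T;T⁻¹])ˣ) {M M' : Matrix (Fin n) (Fin n) ℤ[T;T⁻¹]}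

theorem blockAt_eq_of_mul_Rmat_eq (hi : i + 2 < n)
    (h : M * Rmat n (i + 1) u * Rmat n i u = Rmat n (i + 1) u * Rmat n i u * M') :
    blockAt M' (i + 1) hi = blockAt M i (by omega) := by
  refine Matrix.ext fun a b => ?_
  have hentry := congrFun (congrFun h ⟨i + a, by omega⟩) ⟨i + 1 + b, by omega⟩
  rw [Matrix.mul_assoc,
    mul_apply_of_col_eq_single (Rmat_succ_mul_Rmat_col u (q := ⟨i + b, by omega⟩)
      (by simp only; omega) (by simp only; omega)),
    mul_apply_of_row_eq_single
      (Rmat_succ_mul_Rmat_row u (p := ⟨i + a, by omega⟩) (p' := ⟨i + 1 + a, by omega⟩)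
        (by simp only; omega) (by simp only; omega))] at hentry
  exact (mul_left_cancel₀ (Units.ne_zero u) ((mul_comm _ _).trans hentry)).symm

theorem blockAt_mul_blockAt_eq_zero (hi : i + 2 < n) (hM : IsTwoLocal i M)
    (hM' : IsTwoLocal (i + 1) M') (h : M * M' * Rmat n i u = Rmat n (i + 1) u * M * M') :
    blockAt M i (by omega) 1 1 * blockAt M' (i + 1) hi 0 0 = 0 := by
  have hleft : (M * M' * Rmat n i u) ⟨i + 1, by omega⟩ ⟨i, by omega⟩ =
      M ⟨i + 1, by omega⟩ ⟨i + 1, by omega⟩ * M' ⟨i + 1, by omega⟩ ⟨i + 1, by omega⟩ * ↑u⁻¹ := by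
    have hcol : (Rmat n i u)ᵀ ⟨i, by omega⟩ = Pi.single ⟨i + 1, by omega⟩ ↑u⁻¹ := by
      rw [Rmat_transpose]
      exact Rmat_row_of_val_eq u⁻¹ rfl rfl
    have hdiag := congrArg (fun X => X 1 1) (hM.blockAt_mul (by omega) M')
    simp only [blockAt, submatrix_apply, mul_apply, Fin.sum_univ_two, Fin.val_zero, Fin.val_one,
      add_zero] at hdiag
    rw [mul_apply_of_col_eq_single hcol, mul_apply, hdiag,
      hM' ⟨i, by omega⟩ ⟨i + 1, by omega⟩ (Or.inl ⟨by simp only; omega, by simp only; omega⟩),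
      one_apply_ne (by simp), mul_zero, zero_add]
  have hright : (Rmat n (i + 1) u * M * M') ⟨i + 1, by omega⟩ ⟨i, by omega⟩ = 0 := by
    rw [Matrix.mul_assoc, mul_apply_of_row_eq_single
        (Rmat_row_of_val_eq u (i := i + 1) (p := ⟨i + 1, by omega⟩) (q := ⟨i + 2, hi⟩) rfl rfl),
      mul_apply_of_row_eq_single
        (hM.row_eq_single_of_val_ne (p := ⟨i + 2, hi⟩) (by simp only; omega)
          (by simp only; omega)),
      hM' ⟨i + 2, hi⟩ ⟨i, by omega⟩ (Or.inr ⟨by simp only; omega, by simp only; omega⟩),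
      one_apply_ne (by simp only [ne_eq, Fin.mk.injEq]; omega), mul_zero, mul_zero]
  have hprod := hleft.symm.trans ((congrFun (congrFun h _) _).trans hright)
  exact (mul_eq_zero.mp hprod).resolve_right (Units.ne_zero _)

end Relations

theorem blockAt_eq_blockAt_zero {n : ℕ} (u : (ℤ[T;T⁻¹])ˣ)
    (M : Fin (n - 1) → Matrix (Fin n) (Fin n) ℤ[T;T⁻¹])
    (h : ∀ i j : Fin (n - 1), j.val = i.val + 1 →
      M i * Rmat n j.val u * Rmat n i.val u = Rmat n j.val u * Rmat n i.val u * M j)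
    (h0 : 0 < n - 1) (i : Fin (n - 1)) :
    blockAt (M i) i (by omega) = blockAt (M ⟨0, h0⟩) 0 (by omega) := by
  obtain ⟨m, hm⟩ := i
  induction m with
  | zero => rfl
  | succ m ih =>
    exact (blockAt_eq_of_mul_Rmat_eq u (by omega) (h ⟨m, by omega⟩ ⟨m + 1, hm⟩ rfl)).trans
      (ih (by omega))

namespace WeldedTwin

variable {n : ℕ}

theorem rho_mul_self (i : Fin (n - 1)) :
    (PresentedGroup.of (Sum.inr i) : PresentedGroup (wtRels n)) * PresentedGroup.of (Sum.inr i)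
      = 1 :=
  PresentedGroup.one_of_mem (Or.inl (Or.inr (Or.inr (Or.inr (Or.inr (Or.inl ⟨i, rfl⟩))))))

theorem rho_mul_rho_mul_s {i j : Fin (n - 1)} (hij : j.val = i.val + 1) :
    (PresentedGroup.of (Sum.inr i) : PresentedGroup (wtRels n)) * PresentedGroup.of (Sum.inr j) *
        PresentedGroup.of (Sum.inl i) =
      PresentedGroup.of (Sum.inl j) * PresentedGroup.of (Sum.inr i) *
        PresentedGroup.of (Sum.inr j) :=
  PresentedGroup.mk_eq_mk_of_mul_inv_mem
    (Or.inl (Or.inr (Or.inr (Or.inr (Or.inr (Or.inr (Or.inr ⟨i, j, hij, rfl⟩)))))))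

theorem rho_mul_s_mul_s {i j : Fin (n - 1)} (hij : j.val = i.val + 1) :
    (PresentedGroup.of (Sum.inr i) : PresentedGroup (wtRels n)) * PresentedGroup.of (Sum.inl j) *
        PresentedGroup.of (Sum.inl i) =
      PresentedGroup.of (Sum.inl j) * PresentedGroup.of (Sum.inl i) *
        PresentedGroup.of (Sum.inr j) :=
  PresentedGroup.mk_eq_mk_of_mul_inv_mem (Or.inr ⟨i, j, hij, rfl⟩)

end WeldedTwin

/-- Let `n ≥ 3`, let `f` be a unit of `ℤ[t^{±1}]`, and let
`ĥ : WTₙ → GLₙ(ℤ[t^{±1}])` be a group homomorphism with `ĥ(sᵢ) = Rᵢ(f)` for all `i`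
which is 2-local, i.e. each `ĥ(ρᵢ)` agrees with the identity matrix except possibly in
rows and columns `i, i+1`. Then there is a unit `g` of `ℤ[t^{±1}]` such that
`ĥ(ρᵢ) = Rᵢ(g)` for every `i`. -/
theorem statement16 (n : ℕ) (hn : 3 ≤ n) (f : (LaurentPolynomial ℤ)ˣ)
    (h : PresentedGroup (wtRels n) →*
      Matrix.GeneralLinearGroup (Fin n) (LaurentPolynomial ℤ))
    (hs : ∀ i : Fin (n - 1),
      (h (PresentedGroup.of (Sum.inl i)) :
        Matrix (Fin n) (Fin n) (LaurentPolynomial ℤ)) = Rmat n i.val f)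
    (hloc : ∀ i : Fin (n - 1), ∀ j k : Fin n,
      ((j.val ≠ i.val ∧ j.val ≠ i.val + 1) ∨ (k.val ≠ i.val ∧ k.val ≠ i.val + 1)) →
      (h (PresentedGroup.of (Sum.inr i)) :
          Matrix (Fin n) (Fin n) (LaurentPolynomial ℤ)) j k =
        (1 : Matrix (Fin n) (Fin n) (LaurentPolynomial ℤ)) j k) :
    ∃ g : (LaurentPolynomial ℤ)ˣ, ∀ i : Fin (n - 1),
      (h (PresentedGroup.of (Sum.inr i)) :
        Matrix (Fin n) (Fin n) (LaurentPolynomial ℤ)) = Rmat n i.val g := by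
  let M : Fin (n - 1) → Matrix (Fin n) (Fin n) ℤ[T;T⁻¹] :=
    fun i => h (PresentedGroup.of (Sum.inr i))
  have hmat : ∀ {x y : PresentedGroup (wtRels n)}, x = y →
      (h x : Matrix (Fin n) (Fin n) ℤ[T;T⁻¹]) = h y := fun hxy => hxy ▸ rfl
  have h0 : 0 < n - 1 := by omega
  have h1 : 1 < n - 1 := by omega
  have hM : ∀ i, IsTwoLocal i.val (M i) := hloc
  have hM0 : IsTwoLocal 0 (M ⟨0, h0⟩) := hM ⟨0, h0⟩
  have hM1 : IsTwoLocal 1 (M ⟨1, h1⟩) := hM ⟨1, h1⟩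
  have hsq : M ⟨0, h0⟩ * M ⟨0, h0⟩ = 1 := by
    simpa only [map_mul, Units.val_mul, map_one, Units.val_one] using
      hmat (WeldedTwin.rho_mul_self _)
  have hcorner : M ⟨0, h0⟩ * M ⟨1, h1⟩ * Rmat n 0 f = Rmat n 1 f * M ⟨0, h0⟩ * M ⟨1, h1⟩ := by
    simpa only [map_mul, Units.val_mul, hs] using
      hmat (WeldedTwin.rho_mul_rho_mul_s (i := ⟨0, h0⟩) (j := ⟨1, h1⟩) rfl)
  have hblock := blockAt_eq_blockAt_zero f M (fun i j hij => by
    simpa only [map_mul, Units.val_mul, hs] using hmat (WeldedTwin.rho_mul_s_mul_s hij)) h0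
  have hB1 : blockAt (M ⟨1, h1⟩) 1 (by omega) = blockAt (M ⟨0, h0⟩) 0 (by omega) := hblock _
  obtain ⟨g, hg⟩ := exists_eq_antidiag_of_mul_self_eq_one
    (by rw [← hM0.blockAt_mul (by omega), hsq, blockAt_one])
    (by simpa only [zero_add, hB1] using blockAt_mul_blockAt_eq_zero f (by omega) hM0 hM1 hcorner)
  exact ⟨g, fun i => (hM i).ext_blockAt (isTwoLocal_Rmat g) _
    ((hblock i).trans (hg.trans (blockAt_Rmat g _).symm))⟩
end
end
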